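/- arXiv:2310.02142 — 2 statements merged into one kernel-verified Lean document; each statement's English description precedes it below -/
import Mathlib

section
/- Let G be an n-player Büchi game on a possibly infinite arena, where player i's objective is Büchi(T_i) for a set T_i ⊆ V. Let π' be the outcome from v_0 of some Nash equilibrium such that no vertex occurs infinitely often in π' and Sat(π') ≠ ∅. Then there exists a Nash-equilibrium outcome π from v_0 with Sat(π) = Sat(π') admitting an infinite simple segment decomposition (sg_0, sg_1, sg_2, …) such that: (i) for all l ≥ 1 and all players i ∉ Sat(π), no vertex of T_i occurs in sg_l; and (ii) for all l ≠ l' of the same parity, sg_l and sg_{l'} have no vertex in common. -/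
open scoped ENNReal Classical

/-- An `n`-player arena on a (possibly infinite) directed graph: an edge relation
with no deadlocks, together with an assignment of each vertex to its owner. -/
structure Arena (V : Type) (n : ℕ) where
  E : V → V → Prop
  owner : V → Fin n
  no_deadlock : ∀ v, ∃ v', E v v'

namespace Arena

variable {V : Type} {n : ℕ}

/-- A play: an infinite sequence of vertices following edges. -/
def IsPlay (A : Arena V n) (π : ℕ → V) : Prop := ∀ j, A.E (π j) (π (j + 1))

/-- A strategy: given the past history (the earlier vertices, oldest first) and the
current vertex, pick an `E`-successor of the current vertex. -/
structure Strategy (A : Arena V n) where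
  next : List V → V → V
  valid : ∀ h v, A.E v (next h v)

/-- The list of the first `j` vertices of a play. -/
def pref (π : ℕ → V) (j : ℕ) : List V := (List.range j).map π

/-- A play is consistent with the strategy `σ` used by player `i`. -/
def Consistent (A : Arena V n) (i : Fin n) (σ : A.Strategy) (π : ℕ → V) : Prop :=
  ∀ j, A.owner (π j) = i → π (j + 1) = σ.next (pref π j) (π j)

/-- A memoryless strategy only depends on the current vertex. -/
def Memoryless {A : Arena V n} (σ : A.Strategy) : Prop :=
  ∀ h h' v, σ.next h v = σ.next h' v

def outcomeAux (A : Arena V n) (σ : Fin n → A.Strategy) (v0 : V) : ℕ → List V × V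
  | 0 => ([], v0)
  | j + 1 =>
      let p := outcomeAux A σ v0 j
      (p.1 ++ [p.2], (σ (A.owner p.2)).next p.1 p.2)

/-- The outcome of the strategy profile `σ` from `v0`: the unique play from `v0`
consistent with every strategy of the profile. -/
def outcome (A : Arena V n) (σ : Fin n → A.Strategy) (v0 : V) (j : ℕ) : V :=
  (outcomeAux A σ v0 j).2

/-- Reachability objective: visit `T`. -/
def ReachObj (T : Set V) : Set (ℕ → V) := {π | ∃ j, π j ∈ T}

/-- Safety objective: never visit `T`. -/
def SafeObj (T : Set V) : Set (ℕ → V) := {π | ∀ j, π j ∉ T}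

/-- Büchi objective: visit `T` infinitely often. -/
def BuchiObj (T : Set V) : Set (ℕ → V) := {π | ∀ j, ∃ k, j ≤ k ∧ π k ∈ T}

/-- co-Büchi objective: visit `T` only finitely often. -/
def CoBuchiObj (T : Set V) : Set (ℕ → V) := {π | ∃ j, ∀ k, j ≤ k → π k ∉ T}

/-- Shortest-path cost of a play: the total weight up to the first visit of `T`,
and `⊤` if `T` is never visited. -/
noncomputable def spCost (w : V → V → ℕ) (T : Set V) (π : ℕ → V) : ℝ≥0∞ :=
  if ∃ k, π k ∈ T then
    (Finset.range (sInf {k | π k ∈ T})).sum fun j => (w (π j) (π (j + 1)) : ℝ≥0∞)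
  else ⊤

/-- Winning region of player `p` (whose objective is `Ω`) in a two-player game:
vertices from which `p` has a strategy all of whose consistent plays lie in `Ω`. -/
def WinRegion (A : Arena V 2) (p : Fin 2) (Ω : Set (ℕ → V)) : Set V :=
  {v | ∃ σ : A.Strategy, ∀ π, A.IsPlay π → π 0 = v → A.Consistent p σ π → π ∈ Ω}

/-- Lower value `inf_{σ₁} sup_{σ₂}` of a two-player zero-sum game with cost `c`
(minimised by player 1, maximised by player 2). -/
noncomputable def valIS (A : Arena V 2) (c : (ℕ → V) → ℝ≥0∞) (v : V) : ℝ≥0∞ :=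
  ⨅ σ1 : A.Strategy, ⨆ σ2 : A.Strategy, c (outcome A ![σ1, σ2] v)

/-- Upper value `sup_{σ₂} inf_{σ₁}`. -/
noncomputable def valSI (A : Arena V 2) (c : (ℕ → V) → ℝ≥0∞) (v : V) : ℝ≥0∞ :=
  ⨆ σ2 : A.Strategy, ⨅ σ1 : A.Strategy, c (outcome A ![σ1, σ2] v)

/-- Nash equilibrium from `v0` for cost functions (each player minimises):
no unilateral deviation decreases the deviator's cost. -/
def IsNECost (A : Arena V n) (cost : Fin n → (ℕ → V) → ℝ≥0∞)
    (σ : Fin n → A.Strategy) (v0 : V) : Prop :=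
  ∀ (i : Fin n) (τ : A.Strategy),
    cost i (outcome A σ v0) ≤ cost i (outcome A (Function.update σ i τ) v0)

/-- Nash equilibrium from `v0` for objectives: if a unilateral deviation of player `i`
satisfies `Ω i`, then so does the equilibrium outcome. -/
def IsNEObj (A : Arena V n) (Ω : Fin n → Set (ℕ → V))
    (σ : Fin n → A.Strategy) (v0 : V) : Prop :=
  ∀ (i : Fin n) (τ : A.Strategy),
    outcome A (Function.update σ i τ) v0 ∈ Ω i → outcome A σ v0 ∈ Ω i

/-- The coalition arena of player `i`: player `i` (as player `0`) against all others. -/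
def coalition (A : Arena V n) (i : Fin n) : Arena V 2 where
  E := A.E
  owner := fun v => if A.owner v = i then 0 else 1
  no_deadlock := A.no_deadlock

/-- Winning region of player `i` in their coalition game for objective `Ω`. -/
def coalWin (A : Arena V n) (i : Fin n) (Ω : Set (ℕ → V)) : Set V :=
  WinRegion (coalition A i) 0 Ω

/-- Value of a vertex in player `i`'s coalition game with cost `c`. -/
noncomputable def coalVal (A : Arena V n) (i : Fin n) (c : (ℕ → V) → ℝ≥0∞) (v : V) :
    ℝ≥0∞ :=
  valIS (coalition A i) c v

/-- Players whose reachability objective is satisfied by `π`. -/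
def satReach (T : Fin n → Set V) (π : ℕ → V) : Set (Fin n) := {i | ∃ j, π j ∈ T i}

/-- Players whose safety objective is satisfied by `π`. -/
def satSafe (T : Fin n → Set V) (π : ℕ → V) : Set (Fin n) := {i | ∀ j, π j ∉ T i}

/-- Players whose Büchi objective is satisfied by `π`. -/
def satBuchi (T : Fin n → Set V) (π : ℕ → V) : Set (Fin n) :=
  {i | ∀ j, ∃ k, j ≤ k ∧ π k ∈ T i}

/-- Players whose co-Büchi objective is satisfied by `π`. -/
def satCoBuchi (T : Fin n → Set V) (π : ℕ → V) : Set (Fin n) :=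
  {i | ∃ j, ∀ k, j ≤ k → π k ∉ T i}

/-- Earliest positions at which the targets visited by `π` are first visited. -/
def visitSet (T : Fin n → Set V) (π : ℕ → V) : Set ℕ :=
  {m | ∃ i, (∃ j, π j ∈ T i) ∧ m = sInf {j | π j ∈ T i}}

/-- A Mealy machine with memory states `M`. -/
structure Mealy (A : Arena V n) (M : Type) where
  init : M
  up : M → V → M
  nxt : M → V → V
  valid : ∀ m v, A.E v (nxt m v)

/-- The strategy `σ` is induced by the Mealy machine `mm`. -/
def InducedBy {A : Arena V n} {M : Type} (σ : A.Strategy) (mm : Mealy A M) : Prop :=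
  ∀ h v, σ.next h v = mm.nxt (h.foldl mm.up mm.init) v

/-- `σ` has memory size at most `b`. -/
def HasMemorySize {A : Arena V n} (σ : A.Strategy) (b : ℕ) : Prop :=
  ∃ (M : Type) (mm : Mealy A M), Finite M ∧ Nat.card M ≤ b ∧ InducedBy σ mm

/-- `σ` is a finite-memory strategy. -/
def FiniteMemory {A : Arena V n} (σ : A.Strategy) : Prop :=
  ∃ (M : Type) (mm : Mealy A M), Finite M ∧ InducedBy σ mm

/-- The (finite) segment of `π` between positions `a` and `b` is a simple history. -/
def SimpleSeg (π : ℕ → V) (a b : ℕ) : Prop :=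
  ∀ m m', a ≤ m → m ≤ b → a ≤ m' → m' ≤ b → π m = π m' → m = m'

/-- The suffix of `π` from position `a` is a simple play. -/
def SimplePlaySeg (π : ℕ → V) (a : ℕ) : Prop :=
  ∀ m m', a ≤ m → a ≤ m' → π m = π m' → m = m'

/-- The suffix of `π` from position `a` is a simple lasso `p c^ω` with `p c`
a simple history. -/
def SimpleLassoSeg (π : ℕ → V) (a : ℕ) : Prop :=
  ∃ k ℓ, 0 < ℓ ∧ (∀ m, a + k ≤ m → π (m + ℓ) = π m) ∧
    ∀ m m', a ≤ m → m < a + k + ℓ → a ≤ m' → m' < a + k + ℓ → π m = π m' → m = m'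

/-- The segment of `π` between positions `a` and `b` is a simple cycle. -/
def SimpleCycleSeg (π : ℕ → V) (a b : ℕ) : Prop :=
  a < b ∧ π b = π a ∧
    ∀ m m', a ≤ m → m < b → a ≤ m' → m' < b → π m = π m' → m = m'

/-- Total weight of a history (a list of vertices). -/
def histWeight (w : V → V → ℕ) : List V → ℕ
  | [] => 0
  | [_] => 0
  | a :: b :: t => w a b + histWeight w (b :: t)

/-- The list of vertices along positions `a..b` (inclusive) of a play. -/
def segList (π : ℕ → V) (a b : ℕ) : List V :=
  (List.range (b - a + 1)).map fun m => π (a + m)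

/-- The segment of `π` between positions `a` and `b` has minimal weight among all
histories that share its first and last vertex and traverse only its vertices. -/
def MinWeightSeg (A : Arena V n) (w : V → V → ℕ) (π : ℕ → V) (a b : ℕ) : Prop :=
  ∀ h : List V, h ≠ [] → List.Chain' A.E h →
    h.head? = some (π a) → h.getLast? = some (π b) →
    (∀ x ∈ h, ∃ m, a ≤ m ∧ m ≤ b ∧ π m = x) →
    histWeight w (segList π a b) ≤ histWeight w h

/-- Given cut positions `p`, segments number `l` and `l'` of `π` carry the same
vertex sequence. -/
def SegEq (π : ℕ → V) (p : ℕ → ℕ) (l l' : ℕ) : Prop :=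
  p (l' + 1) - p l' = p (l + 1) - p l ∧
    ∀ m, m ≤ p (l + 1) - p l → π (p l' + m) = π (p l + m)

/-- There is no cycle of the arena using only vertices of `S` and avoiding `avoid`. -/
def NoCycleAvoid (A : Arena V n) (S : Set V) (avoid : V) : Prop :=
  ¬ ∃ (m : ℕ) (c : ℕ → V), 0 < m ∧ (∀ j, j < m → A.E (c j) (c (j + 1))) ∧
      c m = c 0 ∧ ∀ j, j ≤ m → c j ∈ S ∧ c j ≠ avoid

end Arena

open Arena
section Aux
variable {V : Type} {n : ℕ}

theorem pref_length (π : ℕ → V) (j : ℕ) : (pref π j).length = j := by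
  simp [pref]

theorem pref_succ (π : ℕ → V) (j : ℕ) : pref π (j + 1) = pref π j ++ [π j] := by
  simp [pref, List.range_succ]

theorem pref_congr {π ρ : ℕ → V} {j : ℕ} (h : ∀ t, t < j → π t = ρ t) :
    pref π j = pref ρ j := by
  simp only [pref, List.map_inj_left, List.mem_range]
  exact h

theorem pref_take (π : ℕ → V) {d j : ℕ} (h : d ≤ j) :
    (pref π j).take d = pref π d := by
  simp [pref, ← List.map_take, List.take_range, Nat.min_eq_left h]

theorem pref_drop (π : ℕ → V) (d j : ℕ) :
    (pref π j).drop d = (List.range (j - d)).map (fun s => π (d + s)) := by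
  apply List.ext_getElem
  · simp [pref]
  · intro i h1 h2
    simp [pref]

theorem pref_getElem (π : ℕ → V) {j i : ℕ} (h : i < j) :
    (pref π j)[i]'(by simp [pref_length, h]) = π i := by
  simp [pref]

theorem outcome_zero (A : Arena V n) (σ : Fin n → A.Strategy) (v0 : V) :
    outcome A σ v0 0 = v0 := rfl

theorem outcomeAux_fst (A : Arena V n) (σ : Fin n → A.Strategy) (v0 : V) (j : ℕ) :
    (outcomeAux A σ v0 j).1 = pref (outcome A σ v0) j := by
  induction j with
  | zero => simp [outcomeAux, pref]
  | succ j ih =>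
      rw [pref_succ]
      show (outcomeAux A σ v0 j).1 ++ [(outcomeAux A σ v0 j).2] = _
      rw [ih]; rfl

theorem outcome_succ (A : Arena V n) (σ : Fin n → A.Strategy) (v0 : V) (j : ℕ) :
    outcome A σ v0 (j + 1) =
      (σ (A.owner (outcome A σ v0 j))).next (pref (outcome A σ v0) j)
        (outcome A σ v0 j) := by
  show (outcomeAux A σ v0 (j+1)).2 = _
  rw [show (outcomeAux A σ v0 (j+1)).2
      = (σ (A.owner (outcomeAux A σ v0 j).2)).next (outcomeAux A σ v0 j).1
        (outcomeAux A σ v0 j).2 from rfl, outcomeAux_fst]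
  rfl

theorem isPlay_outcome (A : Arena V n) (σ : Fin n → A.Strategy) (v0 : V) :
    A.IsPlay (outcome A σ v0) := by
  intro j
  rw [outcome_succ]
  exact ((σ (A.owner (outcome A σ v0 j)))).valid _ _

theorem outcome_unique (A : Arena V n) (σ : Fin n → A.Strategy) (v0 : V)
    (π : ℕ → V) (h0 : π 0 = v0)
    (hstep : ∀ j, π (j + 1) = (σ (A.owner (π j))).next (pref π j) (π j)) :
    outcome A σ v0 = π := by
  have key : ∀ j, outcome A σ v0 j = π j := by
    intro j
    induction j using Nat.strong_induction_on with
    | _ j ih =>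
      match j with
      | 0 => rw [outcome_zero, h0]
      | j + 1 =>
          rw [outcome_succ, hstep j, ih j (Nat.lt_succ_self j),
            pref_congr (π := outcome A σ v0) (ρ := π)
              (fun t ht => ih t (ht.trans (Nat.lt_succ_self j)))]
  funext j; exact key j

end Aux
section NE
variable {V : Type} {n : ℕ}

theorem pref_add (f : ℕ → V) (a N : ℕ) :
    pref f (a + N) = pref f a ++ (List.range N).map (fun s => f (a + s)) := by
  induction N with
  | zero => simp
  | succ N ih =>
      rw [show a + (N + 1) = (a + N) + 1 from rfl, pref_succ, ih, List.range_succ]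
      simp

theorem pref_eq_imp {f f' : ℕ → V} {j : ℕ} (h : pref f j = pref f' j)
    {i : ℕ} (hij : i < j) : f i = f' i := by
  have h1 := pref_getElem f hij
  simp only [h] at h1
  rw [pref_getElem f' hij] at h1
  exact h1.symm

/-- Deviation point: length of the longest prefix of `H` that follows `π`. -/
noncomputable def devpt (π : ℕ → V) (H : List V) : ℕ :=
  sSup {d | d ≤ H.length ∧ H.take d = pref π d}

theorem devpt_spec (π ρ : ℕ → V) (d0 t : ℕ) (hle : d0 + 1 ≤ t + 1)
    (hagree : ∀ t', t' < d0 + 1 → ρ t' = π t')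
    (hdiff : ρ (d0 + 1) ≠ π (d0 + 1)) :
    devpt π (pref ρ (t + 1)) = d0 + 1 := by
  have hset : {d | d ≤ (pref ρ (t+1)).length ∧ (pref ρ (t+1)).take d = pref π d}
      = {d | d ≤ d0 + 1} := by
    ext d
    simp only [Set.mem_setOf_eq, pref_length]
    constructor
    · rintro ⟨hd, htake⟩
      by_contra hgt
      push_neg at hgt
      have h1 : d0 + 1 < d := hgt
      have h2 : d0 + 1 < t + 1 := lt_of_lt_of_le h1 hd
      apply hdiff
      have hpp : pref ρ (d0 + 2) = pref π (d0 + 2) := by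
        have e2 : ((pref ρ (t + 1)).take d).take (d0 + 2)
            = (pref ρ (t + 1)).take (d0 + 2) := by
          rw [List.take_take]
          congr 1
          omega
        rw [htake, pref_take π (by omega)] at e2
        rw [pref_take ρ (by omega)] at e2
        exact e2.symm
      exact pref_eq_imp hpp (by omega)
    · intro hd
      refine ⟨le_trans hd hle, ?_⟩
      rw [pref_take ρ (le_trans hd hle)]
      exact pref_congr fun t' ht' => hagree t' (lt_of_lt_of_le ht' hd)
  rw [devpt, hset]
  apply le_antisymm
  · exact csSup_le ⟨0, Nat.zero_le _⟩ fun x hx => hx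
  · exact le_csSup ⟨d0 + 1, fun x hx => hx⟩ (le_refl (d0 + 1))

/-- Strategy: follow the play `π`; upon deviation, translate the history to the
original game (whose equilibrium outcome is `π'`) and play like `σ0`. -/
noncomputable def followStrat (A : Arena V n) (σ0 : A.Strategy) (π π' : ℕ → V)
    (g : ℕ → ℕ) (hplay : A.IsPlay π) : A.Strategy where
  next h v :=
    if v = π h.length ∧ h = pref π h.length then π (h.length + 1)
    else σ0.next
      (pref π' (g (devpt π (h ++ [v]) - 1) + 1) ++ h.drop (devpt π (h ++ [v]))) v
  valid := by
    intro h v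
    by_cases hc : v = π h.length ∧ h = pref π h.length
    · rw [if_pos hc, hc.1]; exact hplay h.length
    · rw [if_neg hc]; exact σ0.valid _ _

theorem followStrat_on (A : Arena V n) (σ0 : A.Strategy) (π π' : ℕ → V)
    (g : ℕ → ℕ) (hplay : A.IsPlay π) (j : ℕ) :
    (followStrat A σ0 π π' g hplay).next (pref π j) (π j) = π (j + 1) := by
  show (if _ then _ else _) = _
  rw [if_pos (by rw [pref_length]; exact ⟨rfl, rfl⟩), pref_length]

theorem followStrat_off (A : Arena V n) (σ0 : A.Strategy) (π π' : ℕ → V)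
    (g : ℕ → ℕ) (hplay : A.IsPlay π) (h : List V) (v : V)
    (hc : ¬(v = π h.length ∧ h = pref π h.length)) :
    (followStrat A σ0 π π' g hplay).next h v = σ0.next
      (pref π' (g (devpt π (h ++ [v]) - 1) + 1) ++ h.drop (devpt π (h ++ [v]))) v := by
  show (if _ then _ else _) = _
  rw [if_neg hc]

/-- The deviating strategy transported to the original game: follow `π'` up to
position `gd0`, then simulate `τ` via history translation. -/
noncomputable def devStrat (A : Arena V n) (τ : A.Strategy) (π π' : ℕ → V)
    (d0 gd0 : ℕ) (hplay' : A.IsPlay π') : A.Strategy where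
  next h v :=
    if h.length < gd0 ∧ v = π' h.length then π' (h.length + 1)
    else τ.next (pref π d0 ++ h.drop gd0) v
  valid := by
    intro h v
    by_cases hc : h.length < gd0 ∧ v = π' h.length
    · rw [if_pos hc, hc.2]; exact hplay' h.length
    · rw [if_neg hc]; exact τ.valid _ _

theorem devStrat_on (A : Arena V n) (τ : A.Strategy) (π π' : ℕ → V)
    (d0 gd0 : ℕ) (hplay' : A.IsPlay π') (j : ℕ) (hj : j < gd0) :
    (devStrat A τ π π' d0 gd0 hplay').next (pref π' j) (π' j) = π' (j + 1) := by
  show (if _ then _ else _) = _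
  rw [if_pos (by rw [pref_length]; exact ⟨hj, rfl⟩), pref_length]

theorem devStrat_off (A : Arena V n) (τ : A.Strategy) (π π' : ℕ → V)
    (d0 gd0 : ℕ) (hplay' : A.IsPlay π') (h : List V) (v : V)
    (hc : ¬(h.length < gd0 ∧ v = π' h.length)) :
    (devStrat A τ π π' d0 gd0 hplay').next h v
      = τ.next (pref π d0 ++ h.drop gd0) v := by
  show (if _ then _ else _) = _
  rw [if_neg hc]

/-- NE transfer: if `π` is a play from `v0` whose vertices all lie on `π'`
(the outcome of a NE `σ'`) and `satBuchi T π = satBuchi T π'`, then `π` is the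
outcome of some NE. -/
theorem construct_NE (A : Arena V n) (T : Fin n → Set V) (v0 : V)
    (σ' : Fin n → A.Strategy)
    (hNE : A.IsNEObj (fun i => BuchiObj (T i)) σ' v0)
    (π' : ℕ → V) (hπ' : outcome A σ' v0 = π')
    (π : ℕ → V) (g : ℕ → ℕ) (hplay : A.IsPlay π) (h0 : π 0 = v0)
    (hg : ∀ m, π m = π' (g m)) (hsatEq : satBuchi T π = satBuchi T π') :
    ∃ σ : Fin n → A.Strategy,
      A.IsNEObj (fun i => BuchiObj (T i)) σ v0 ∧ outcome A σ v0 = π := by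
  classical
  have hplay' : A.IsPlay π' := hπ' ▸ isPlay_outcome A σ' v0
  have hπ'0 : π' 0 = v0 := by rw [← hπ']; rfl
  have hπ'step : ∀ j, π' (j + 1) = (σ' (A.owner (π' j))).next (pref π' j) (π' j) := by
    intro j; rw [← hπ']; exact outcome_succ A σ' v0 j
  set σfun : Fin n → A.Strategy :=
    fun j => followStrat A (σ' j) π π' g hplay with hσfun
  have houtcome : outcome A σfun v0 = π := by
    apply outcome_unique _ _ _ _ h0
    intro j
    exact (followStrat_on A (σ' (A.owner (π j))) π π' g hplay j).symm
  refine ⟨σfun, ?_, houtcome⟩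
  intro i τ hdev
  rw [houtcome]
  set ρ : ℕ → V := outcome A (Function.update σfun i τ) v0 with hρ
  by_cases hall : ∀ t, ρ t = π t
  · have : ρ = π := funext hall
    rw [← this]; exact hdev
  · push_neg at hall
    -- first difference
    have hmne : {t | ρ t ≠ π t}.Nonempty := hall
    obtain ⟨d0, hm⟩ : ∃ d0, sInf {t | ρ t ≠ π t} = d0 + 1 := by
      have h00 : ρ 0 = π 0 := by rw [h0]; rfl
      have hne0 : sInf {t | ρ t ≠ π t} ≠ 0 := fun h => (h ▸ Nat.sInf_mem hmne) h00
      exact ⟨sInf {t | ρ t ≠ π t} - 1, by omega⟩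
    have hmdiff : ρ (d0 + 1) ≠ π (d0 + 1) := hm ▸ Nat.sInf_mem hmne
    have hmlt : ∀ t, t < d0 + 1 → ρ t = π t := by
      intro t ht
      by_contra hne
      have := Nat.sInf_le (show t ∈ {t | ρ t ≠ π t} from hne)
      omega
    have hρstep : ∀ t, ρ (t + 1) =
        ((Function.update σfun i τ) (A.owner (ρ t))).next (pref ρ t) (ρ t) :=
      fun t => outcome_succ A _ v0 t
    have hρd0 : ρ d0 = π d0 := hmlt d0 (Nat.lt_succ_self d0)
    have hprefd0 : pref ρ d0 = pref π d0 :=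
      pref_congr fun t ht => hmlt t (ht.trans (Nat.lt_succ_self d0))
    -- the deviation vertex is owned by i
    have howner : A.owner (π d0) = i := by
      by_contra hne
      apply hmdiff
      rw [hρstep d0, hρd0, hprefd0, Function.update_of_ne hne]
      exact followStrat_on A (σ' (A.owner (π d0))) π π' g hplay d0
    have hρd1 : ρ (d0 + 1) = τ.next (pref π d0) (π d0) := by
      rw [hρstep d0, hρd0, hprefd0, howner, Function.update_self]
    -- virtual deviation strategy in the original game
    set τ'' : A.Strategy := devStrat A τ π π' d0 (g d0) hplay' with hτ''
    set ρs : ℕ → V := outcome A (Function.update σ' i τ'') v0 with hρs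
    have hρsstep : ∀ t, ρs (t + 1) =
        ((Function.update σ' i τ'') (A.owner (ρs t))).next (pref ρs t) (ρs t) :=
      fun t => outcome_succ A _ v0 t
    -- Claim A : ρs agrees with π' up to g d0
    have claimA : ∀ t, t ≤ g d0 → ρs t = π' t := by
      intro t
      induction t using Nat.strong_induction_on with
      | _ t ih =>
      match t with
      | 0 => intro _; rw [hπ'0]; rfl
      | t + 1 =>
          intro ht
          have ht' : t ≤ g d0 := le_of_lt (Nat.lt_of_succ_le ht)
          have hcur : ρs t = π' t := ih t (Nat.lt_succ_self t) ht'
          have hpref : pref ρs t = pref π' t :=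
            pref_congr fun t' ht'' =>
              ih t' (ht''.trans (Nat.lt_succ_self t)) (by omega)
          rw [hρsstep t, hcur, hpref]
          by_cases hio : A.owner (π' t) = i
          · rw [hio, Function.update_self]
            exact devStrat_on A τ π π' d0 (g d0) hplay' t (Nat.lt_of_succ_le ht)
          · rw [Function.update_of_ne hio]
            exact (hπ'step t).symm
    have hπd0 : ρs (g d0) = π d0 := by rw [claimA (g d0) le_rfl, hg d0]
    -- Claim B : the tails agree
    have claimB : ∀ s, ρs (g d0 + 1 + s) = ρ (d0 + 1 + s) := by
      intro s
      induction s using Nat.strong_induction_on with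
      | _ s ih =>
      match s with
      | 0 =>
          show ρs (g d0 + 1) = ρ (d0 + 1 + 0)
          rw [hρsstep (g d0), hπd0, howner, Function.update_self]
          rw [devStrat_off A τ π π' d0 (g d0) hplay' _ _
            (by rw [pref_length]; rintro ⟨hlt, -⟩; exact lt_irrefl _ hlt)]
          have hdrop : (pref ρs (g d0)).drop (g d0) = [] :=
            List.drop_eq_nil_of_le (by rw [pref_length])
          rw [hdrop, List.append_nil, show d0 + 1 + 0 = d0 + 1 from rfl, hρd1]
      | s + 1 =>
          have hcur : ρs (g d0 + 1 + s) = ρ (d0 + 1 + s) :=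
            ih s (Nat.lt_succ_self s)
          -- the translated history identities
          have hprefρs : pref ρs (g d0 + 1 + s)
              = pref π' (g d0 + 1) ++ (List.range s).map (fun s' => ρ (d0 + 1 + s')) := by
            rw [pref_add ρs (g d0 + 1) s]
            congr 1
            · exact pref_congr fun t' ht' => claimA t' (by omega)
            · exact List.map_congr_left fun s' hs' =>
                ih s' (Nat.lt_succ_of_lt (List.mem_range.mp hs'))
          have hprefρ : pref ρ (d0 + 1 + s)
              = pref π (d0 + 1) ++ (List.range s).map (fun s' => ρ (d0 + 1 + s')) := by
            rw [pref_add ρ (d0 + 1) s]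
            congr 1
            exact pref_congr fun t' ht' => hmlt t' ht'
          show ρs ((g d0 + 1 + s) + 1) = ρ ((d0 + 1 + s) + 1)
          rw [hρsstep (g d0 + 1 + s), hρstep (d0 + 1 + s), hcur]
          by_cases hio : A.owner (ρ (d0 + 1 + s)) = i
          · rw [hio, Function.update_self, Function.update_self]
            rw [devStrat_off A τ π π' d0 (g d0) hplay' _ _
              (by rw [pref_length]; rintro ⟨hlt, -⟩; omega)]
            congr 1
            rw [hprefρs, hprefρ]
            rw [List.drop_append_of_le_length (by rw [pref_length]; omega)]
            rw [pref_drop π' (g d0) (g d0 + 1)]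
            rw [pref_succ π d0]
            simp [hg d0, List.range_succ]
          · rw [Function.update_of_ne hio, Function.update_of_ne hio]
            have hcond : ¬(ρ (d0 + 1 + s) = π (pref ρ (d0 + 1 + s)).length ∧
                pref ρ (d0 + 1 + s) = pref π (pref ρ (d0 + 1 + s)).length) := by
              rw [pref_length]
              rintro ⟨h1, h2⟩
              apply hmdiff
              have hfull : pref ρ (d0 + 1 + s + 1) = pref π (d0 + 1 + s + 1) := by
                rw [pref_succ, pref_succ, h1, h2]
              exact pref_eq_imp hfull (by omega)
            rw [followStrat_off A (σ' (A.owner (ρ (d0 + 1 + s)))) π π' g hplay _ _ hcond]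
            have hdev2 : devpt π (pref ρ (d0 + 1 + s) ++ [ρ (d0 + 1 + s)]) = d0 + 1 := by
              rw [← pref_succ, show d0 + 1 + s + 1 = (d0 + s + 1) + 1 from by omega]
              exact devpt_spec π ρ d0 (d0 + s + 1) (by omega) hmlt hmdiff
            rw [hdev2]
            congr 1
            rw [show d0 + 1 - 1 = d0 from rfl, hprefρs, hprefρ]
            rw [List.drop_append_of_le_length (by rw [pref_length])]
            rw [List.drop_eq_nil_of_le (le_of_eq (pref_length π (d0 + 1))),
              List.nil_append]
    -- transfer Büchi satisfaction through the virtual play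
    have hρsBuchi : ρs ∈ BuchiObj (T i) := by
      intro j
      obtain ⟨k, hk1, hk2⟩ := hdev (d0 + 1 + j)
      refine ⟨g d0 + 1 + (k - (d0 + 1)), by omega, ?_⟩
      rw [claimB (k - (d0 + 1)), show d0 + 1 + (k - (d0 + 1)) = k by omega]
      exact hk2
    have hπ'B : outcome A σ' v0 ∈ BuchiObj (T i) := hNE i τ'' hρsBuchi
    rw [hπ'] at hπ'B
    have hi : i ∈ satBuchi T π := by rw [hsatEq]; exact hπ'B
    exact hi

end NE
section Play
variable {V : Type} {n : ℕ}

theorem construct_play (A : Arena V n) (T : Fin n → Set V)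
    (π' : ℕ → V) (hplay' : A.IsPlay π')
    (hfin : ∀ v, ∃ j, ∀ k, j ≤ k → π' k ≠ v)
    (hsat : (satBuchi T π').Nonempty) :
    ∃ (π : ℕ → V) (g : ℕ → ℕ) (p : ℕ → ℕ),
      A.IsPlay π ∧ π 0 = π' 0 ∧ (∀ m, π m = π' (g m)) ∧
      satBuchi T π = satBuchi T π' ∧
      p 0 = 0 ∧ (∀ l, p l ≤ p (l + 1)) ∧ (∀ N, ∃ l, N < p l) ∧
      (∀ l, SimpleSeg π (p l) (p (l + 1))) ∧
      (∀ l, 1 ≤ l → ∀ i, i ∉ satBuchi T π' →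
        ∀ m, p l ≤ m → m ≤ p (l + 1) → π m ∉ T i) ∧
      (∀ l l', l ≠ l' → l % 2 = l' % 2 →
        ∀ m m', p l ≤ m → m ≤ p (l + 1) → p l' ≤ m' → m' ≤ p (l' + 1) →
          π m ≠ π m') := by
  classical
  obtain ⟨i0, hi0⟩ := hsat
  have hn : 0 < n := i0.pos
  -- bound after which losers' targets never occur
  have hJex : ∀ i : Fin n, ∃ J, i ∉ satBuchi T π' → ∀ k, J ≤ k → π' k ∉ T i := by
    intro i
    by_cases hi : i ∈ satBuchi T π'
    · exact ⟨0, fun h => absurd hi h⟩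
    · simp only [satBuchi, Set.mem_setOf_eq, not_forall] at hi
      obtain ⟨j, hj⟩ := hi
      push_neg at hj
      exact ⟨j, fun _ k hk => hj k hk⟩
  choose Jf hJf using hJex
  set J := Finset.univ.sup Jf with hJdef
  have hJ : ∀ i : Fin n, i ∉ satBuchi T π' → ∀ k, J ≤ k → π' k ∉ T i := by
    intro i hi k hk
    exact hJf i hi k (le_trans (Finset.le_sup (Finset.mem_univ i)) hk)
  -- disappearance bound
  have hdisex : ∀ N, ∃ D, ∀ a, a ≤ N → ∀ b, D ≤ b → π' b ≠ π' a := by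
    intro N
    induction N with
    | zero =>
        obtain ⟨j, hj⟩ := hfin (π' 0)
        exact ⟨j, fun a ha b hb => by
          have : a = 0 := Nat.le_zero.mp ha
          rw [this]; exact hj b hb⟩
    | succ N ih =>
        obtain ⟨D, hD⟩ := ih
        obtain ⟨j, hj⟩ := hfin (π' (N + 1))
        refine ⟨max D j, fun a ha b hb => ?_⟩
        rcases Nat.lt_or_ge a (N + 1) with h | h
        · exact hD a (by omega) b (le_trans (le_max_left _ _) hb)
        · have ha' : a = N + 1 := by omega
          rw [ha']; exact hj b (le_trans (le_max_right _ _) hb)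
  choose D hD using hdisex
  -- cycling through the winners
  set tfun : ℕ → Fin n := fun l =>
    if (⟨l % n, Nat.mod_lt _ hn⟩ : Fin n) ∈ satBuchi T π'
      then ⟨l % n, Nat.mod_lt _ hn⟩ else i0 with htfundef
  have htfun : ∀ l, tfun l ∈ satBuchi T π' := by
    intro l
    by_cases h : (⟨l % n, Nat.mod_lt _ hn⟩ : Fin n) ∈ satBuchi T π'
    · simpa [htfundef, h] using h
    · simpa [htfundef, h] using hi0
  have htfun2 : ∀ i ∈ satBuchi T π', ∀ L, ∃ l, L ≤ l ∧ tfun l = i := by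
    intro i hi L
    refine ⟨i.val + n * (L + 1), by
      have h1 : 1 * (L + 1) ≤ n * (L + 1) := Nat.mul_le_mul_right _ hn
      omega, ?_⟩
    have hmod : (i.val + n * (L + 1)) % n = i.val := by
      rw [Nat.add_mul_mod_self_left]
      exact Nat.mod_eq_of_lt i.isLt
    have : (⟨(i.val + n * (L + 1)) % n, Nat.mod_lt _ hn⟩ : Fin n) = i :=
      Fin.ext hmod
    rw [htfundef]
    simp only [this, if_pos hi]
  -- the hitting sequence k
  have hkex : ∀ (l prev : ℕ), ∃ K, prev < K ∧ J ≤ K ∧ D prev ≤ K ∧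
      π' K ∈ T (tfun l) := by
    intro l prev
    obtain ⟨K, hK1, hK2⟩ := htfun l (max (prev + 1) (max J (D prev)))
    exact ⟨K, by omega, by omega, by omega, hK2⟩
  set k : ℕ → ℕ := fun l => Nat.rec (motive := fun _ => ℕ) 0
    (fun l' prev => Classical.choose (hkex l' prev)) l with hkdef
  have hk0 : k 0 = 0 := rfl
  have hkspec : ∀ l, k l < k (l + 1) ∧ J ≤ k (l + 1) ∧ D (k l) ≤ k (l + 1) ∧
      π' (k (l + 1)) ∈ T (tfun l) := by
    intro l
    exact Classical.choose_spec (hkex l (k l))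
  have hkmono : ∀ l l', l ≤ l' → k l ≤ k l' := by
    intro l l' h
    induction l' with
    | zero =>
        have : l = 0 := Nat.le_zero.mp h
        rw [this]
    | succ l' ih =>
        rcases Nat.lt_or_ge l (l' + 1) with h' | h'
        · exact le_trans (ih (by omega)) (le_of_lt (hkspec l').1)
        · have : l = l' + 1 := by omega
          rw [this]
  have hkge : ∀ l, l ≤ k l := by
    intro l
    induction l with
    | zero => exact Nat.zero_le _
    | succ l ih => have := (hkspec l).1; omega
  -- disjointness of far-apart parts of π'
  have Hdis : ∀ l a b, a ≤ k l → k (l + 1) ≤ b → π' b ≠ π' a := by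
    intro l a b ha hb
    exact hD (k l) a ha b (le_trans (hkspec l).2.2.1 hb)
  -- block endpoints: first occurrence (after k l) of the vertex π' (k (l+1))
  set e : ℕ → ℕ := fun l => sInf {y | k l ≤ y ∧ π' y = π' (k (l + 1))} with hedef
  have heS : ∀ l, {y | k l ≤ y ∧ π' y = π' (k (l + 1))}.Nonempty :=
    fun l => ⟨k (l + 1), le_of_lt (hkspec l).1, rfl⟩
  have he1 : ∀ l, k l ≤ e l := fun l => (Nat.sInf_mem (heS l)).1
  have he3 : ∀ l, π' (e l) = π' (k (l + 1)) := fun l => (Nat.sInf_mem (heS l)).2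
  have he2 : ∀ l, e l ≤ k (l + 1) := fun l =>
    Nat.sInf_le ⟨le_of_lt (hkspec l).1, rfl⟩
  have he4 : ∀ l y, k l ≤ y → y < e l → π' y ≠ π' (k (l + 1)) := by
    intro l y hy1 hy2 hy3
    have h5 : e l ≤ y := Nat.sInf_le ⟨hy1, hy3⟩
    omega
  have he5 : ∀ l, k l < e l := by
    intro l
    rcases Nat.lt_or_ge (k l) (e l) with h | h
    · exact h
    · exfalso
      have hekl : e l = k l := le_antisymm h (he1 l)
      exact Hdis l (k l) (k (l + 1)) le_rfl le_rfl (by rw [← he3 l, hekl])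
  -- loop-erasing jump inside a block
  set nxt : ℕ → ℕ → ℕ :=
    fun l x => sSup {y | x ≤ y ∧ y < e l ∧ π' y = π' x} + 1 with hnxtdef
  have hnxtS : ∀ l x, x < e l →
      sSup {y | x ≤ y ∧ y < e l ∧ π' y = π' x} ∈
        {y | x ≤ y ∧ y < e l ∧ π' y = π' x} := by
    intro l x hx
    exact Nat.sSup_mem ⟨x, le_rfl, hx, rfl⟩ ⟨e l, fun y hy => le_of_lt hy.2.1⟩
  have hnxt1 : ∀ l x, x < e l → x < nxt l x := by
    intro l x hx
    have h5 : x ≤ sSup {y | x ≤ y ∧ y < e l ∧ π' y = π' x} := (hnxtS l x hx).1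
    show x < sSup {y | x ≤ y ∧ y < e l ∧ π' y = π' x} + 1
    omega
  have hnxt2 : ∀ l x, x < e l → nxt l x ≤ e l := by
    intro l x hx
    have h5 : sSup {y | x ≤ y ∧ y < e l ∧ π' y = π' x} < e l := (hnxtS l x hx).2.1
    show sSup {y | x ≤ y ∧ y < e l ∧ π' y = π' x} + 1 ≤ e l
    omega
  have hnxtedge : ∀ l x, x < e l → A.E (π' x) (π' (nxt l x)) := by
    intro l x hx
    have h := hnxtS l x hx
    have hE := hplay' (sSup {y | x ≤ y ∧ y < e l ∧ π' y = π' x})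
    rw [h.2.2] at hE
    exact hE
  have hnxtUB : ∀ l x, x < e l → ∀ y, x ≤ y → y < e l → π' y = π' x →
      y < nxt l x := by
    intro l x hx y h1 h2 h3
    have h5 : y ≤ sSup {y | x ≤ y ∧ y < e l ∧ π' y = π' x} :=
      le_csSup (⟨e l, fun z hz => le_of_lt hz.2.1⟩ :
        BddAbove {y | x ≤ y ∧ y < e l ∧ π' y = π' x}) ⟨h1, h2, h3⟩
    show y < sSup {y | x ≤ y ∧ y < e l ∧ π' y = π' x} + 1
    omega
  -- iterated jumps: the loop-erased block path
  set F : ℕ → ℕ → ℕ := fun l m => Nat.rec (motive := fun _ => ℕ) (k l)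
    (fun _ prev => if prev < e l then nxt l prev else prev) m with hFdef
  have hF0 : ∀ l, F l 0 = k l := fun l => rfl
  have hFS : ∀ l m, F l (m + 1) = if F l m < e l then nxt l (F l m) else F l m :=
    fun l m => rfl
  have hFle : ∀ l m, F l m ≤ e l := by
    intro l m
    induction m with
    | zero => exact he1 l
    | succ m ih =>
        rw [hFS]
        split
        · exact hnxt2 l _ (by assumption)
        · exact ih
  have hFge : ∀ l m, k l ≤ F l m := by
    intro l m
    induction m with
    | zero => exact le_of_eq (hF0 l).symm
    | succ m ih =>
        rw [hFS]
        split
        · exact le_trans ih (le_of_lt (hnxt1 l _ (by assumption)))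
        · exact ih
  have hFmono : ∀ l m m', m ≤ m' → F l m ≤ F l m' := by
    intro l m m' h
    induction m' with
    | zero => rw [Nat.le_zero.mp h]
    | succ m' ih =>
        rcases Nat.lt_or_ge m (m' + 1) with h' | h'
        · refine le_trans (ih (by omega)) ?_
          rw [hFS]
          split
          · exact le_of_lt (hnxt1 l _ (by assumption))
          · exact le_rfl
        · have : m = m' + 1 := by omega
          rw [this]
  have hFreach : ∀ l m, F l m = e l ∨ k l + m ≤ F l m := by
    intro l m
    induction m with
    | zero => right; rw [hF0]; omega
    | succ m ih =>
        rcases ih with h | h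
        · left; rw [hFS, h, if_neg (lt_irrefl _)]
        · rcases Nat.lt_or_ge (F l m) (e l) with h' | h'
          · right
            rw [hFS, if_pos h']
            have := hnxt1 l (F l m) h'
            omega
          · left
            have heq : F l m = e l := le_antisymm (hFle l m) h'
            rw [hFS, heq, if_neg (lt_irrefl _)]
  -- block length
  set len : ℕ → ℕ := fun l => sInf {m | F l m = e l} with hlendef
  have hlenS : ∀ l, {m | F l m = e l}.Nonempty := by
    intro l
    rcases hFreach l (e l - k l) with h | h
    · exact ⟨e l - k l, h⟩
    · exact ⟨e l - k l, le_antisymm (hFle _ _) (by have := he1 l; omega)⟩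
  have hlen1 : ∀ l, F l (len l) = e l := fun l => Nat.sInf_mem (hlenS l)
  have hlenpos : ∀ l, 1 ≤ len l := by
    intro l
    rcases Nat.eq_zero_or_pos (len l) with h | h
    · exfalso
      have h2 := hlen1 l
      rw [h, hF0] at h2
      exact absurd h2 (ne_of_lt (he5 l))
    · exact h
  have hlenmin : ∀ l m, m < len l → F l m < e l := by
    intro l m hm
    have hne : F l m ≠ e l := by
      intro hc
      have h5 : len l ≤ m := Nat.sInf_le hc
      omega
    exact lt_of_le_of_ne (hFle l m) hne
  -- the block path is simple
  have hFsimple : ∀ l a b, a ≤ len l → b ≤ len l →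
      π' (F l a) = π' (F l b) → a = b := by
    have key : ∀ l a b, a < b → b ≤ len l → π' (F l a) ≠ π' (F l b) := by
      intro l a b hab hb heq
      have ha : a < len l := by omega
      have hFa : F l a < e l := hlenmin l a ha
      rcases Nat.lt_or_ge (F l b) (e l) with h' | h'
      · have h1 : F l b < nxt l (F l a) :=
          hnxtUB l (F l a) hFa (F l b) (hFmono l a b (le_of_lt hab)) h' heq.symm
        have h2 : nxt l (F l a) ≤ F l b := by
          have hstep : F l (a + 1) = nxt l (F l a) := by rw [hFS, if_pos hFa]
          rw [← hstep]
          exact hFmono l (a + 1) b hab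
        omega
      · have hFb : F l b = e l := le_antisymm (hFle l b) h'
        apply he4 l (F l a) (hFge l a) hFa
        rw [heq, hFb, he3 l]
    intro l a b ha hb heq
    rcases Nat.lt_trichotomy a b with h | h | h
    · exact absurd heq (key l a b h hb)
    · exact h
    · exact absurd heq.symm (key l b a h ha)
  -- cut positions
  set p : ℕ → ℕ := fun l => Nat.rec (motive := fun _ => ℕ) 0
    (fun l' prev => prev + len l') l with hpdef
  have hp0 : p 0 = 0 := rfl
  have hpS : ∀ l, p (l + 1) = p l + len l := fun l => rfl
  have hpmono : ∀ l, p l < p (l + 1) := by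
    intro l
    have := hlenpos l
    rw [hpS]
    omega
  have hpmono' : ∀ l l', l ≤ l' → p l ≤ p l' := by
    intro l l' h
    induction l' with
    | zero => rw [Nat.le_zero.mp h]
    | succ l' ih =>
        rcases Nat.lt_or_ge l (l' + 1) with h' | h'
        · exact le_trans (ih (by omega)) (le_of_lt (hpmono l'))
        · have : l = l' + 1 := by omega
          rw [this]
  have hpge : ∀ l, l ≤ p l := by
    intro l
    induction l with
    | zero => exact le_rfl
    | succ l ih =>
        have := hlenpos l
        rw [hpS]
        omega
  -- block of a position
  set blk : ℕ → ℕ := fun m => sSup {l | p l ≤ m} with hblkdef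
  have hblkbdd : ∀ m, BddAbove {l | p l ≤ m} := fun m =>
    ⟨m, fun l hl => le_trans (hpge l) hl⟩
  have hblk1 : ∀ m, p (blk m) ≤ m := by
    intro m
    have h := Nat.sSup_mem
      (show {l | p l ≤ m}.Nonempty from ⟨0, show p 0 ≤ m by omega⟩) (hblkbdd m)
    exact h
  have hblk2 : ∀ m, m < p (blk m + 1) := by
    intro m
    by_contra h
    push_neg at h
    have h5 : blk m + 1 ≤ blk m :=
      le_csSup (hblkbdd m) (show blk m + 1 ∈ {l | p l ≤ m} from h)
    omega
  have hblkeq : ∀ l m, p l ≤ m → m < p (l + 1) → blk m = l := by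
    intro l m h1 h2
    apply le_antisymm
    · apply csSup_le (s := {l | p l ≤ m}) ⟨0, show p 0 ≤ m by omega⟩
      intro l' hl'
      by_contra hgt
      push_neg at hgt
      have hA : p (l + 1) ≤ p l' := hpmono' _ _ hgt
      have hB : p l' ≤ m := hl'
      omega
    · exact le_csSup (hblkbdd m) h1
  -- the new play
  set g : ℕ → ℕ := fun m => F (blk m) (m - p (blk m)) with hgdef
  have hgseg : ∀ l m, p l ≤ m → m ≤ p (l + 1) → π' (g m) = π' (F l (m - p l)) := by
    intro l m h1 h2
    rcases Nat.lt_or_ge m (p (l + 1)) with h | h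
    · show π' (F (blk m) (m - p (blk m))) = _
      rw [hblkeq l m h1 h]
    · have hm : m = p (l + 1) := by omega
      have hblkm : blk m = l + 1 := by
        apply hblkeq (l + 1) m (le_of_eq hm.symm)
        rw [hm]
        exact hpmono (l + 1)
      have hg1 : π' (g m) = π' (F (l + 1) 0) := by
        show π' (F (blk m) (m - p (blk m))) = _
        rw [hblkm, show m - p (l + 1) = 0 by omega]
      have hoff : m - p l = len l := by
        rw [hm, hpS]
        omega
      rw [hg1, show F (l + 1) 0 = k (l + 1) from hF0 (l + 1), hoff,
        show F l (len l) = e l from hlen1 l, he3 l]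
  have hπ0 : π' (g 0) = π' 0 := by
    have hblk0 : blk 0 = 0 := hblkeq 0 0 le_rfl (by have := hpmono 0; omega)
    show π' (F (blk 0) (0 - p (blk 0))) = π' 0
    rw [hblk0, hp0, show F 0 (0 - 0) = k 0 from hF0 0, hk0]
  have hplayπ : A.IsPlay (fun m => π' (g m)) := by
    intro m
    dsimp only
    have h1 := hblk1 m
    have h2 := hblk2 m
    have hoff : m - p (blk m) < len (blk m) := by
      have := hpS (blk m)
      omega
    have hFlt : F (blk m) (m - p (blk m)) < e (blk m) := hlenmin _ _ hoff
    have ha : π' (g m) = π' (F (blk m) (m - p (blk m))) :=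
      hgseg (blk m) m h1 (by omega)
    have hb : π' (g (m + 1)) = π' (F (blk m) (m + 1 - p (blk m))) :=
      hgseg (blk m) (m + 1) (by omega) (by omega)
    rw [ha, hb, show m + 1 - p (blk m) = (m - p (blk m)) + 1 by omega,
      hFS, if_pos hFlt]
    exact hnxtedge _ _ hFlt
  -- simplicity of segments
  have hsimple : ∀ l, SimpleSeg (fun m => π' (g m)) (p l) (p (l + 1)) := by
    intro l m m' h1 h2 h3 h4 heq
    dsimp only at heq
    rw [hgseg l m h1 h2, hgseg l m' h3 h4] at heq
    have hA := hpS l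
    have := hFsimple l (m - p l) (m' - p l) (by omega) (by omega) heq
    omega
  -- losers' targets avoided from segment 1 on
  have hcondi : ∀ l, 1 ≤ l → ∀ i, i ∉ satBuchi T π' →
      ∀ m, p l ≤ m → m ≤ p (l + 1) → π' (g m) ∉ T i := by
    intro l hl i hi m h1 h2
    rw [hgseg l m h1 h2]
    apply hJ i hi
    have h3 : k 1 ≤ k l := hkmono 1 l hl
    have h4 : J ≤ k 1 := (hkspec 0).2.1
    have := hFge l (m - p l)
    omega
  -- far-apart segments are vertex-disjoint
  have hcondii : ∀ l l', l + 2 ≤ l' → ∀ m m', p l ≤ m → m ≤ p (l + 1) →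
      p l' ≤ m' → m' ≤ p (l' + 1) → π' (g m') ≠ π' (g m) := by
    intro l l' hll m m' h1 h2 h3 h4
    rw [hgseg l m h1 h2, hgseg l' m' h3 h4]
    apply Hdis (l + 1)
    · exact le_trans (hFle l _) (he2 l)
    · exact le_trans (hkmono (l + 2) l' hll) (hFge l' _)
  -- satisfied players are preserved
  have hsatsub : ∀ i, i ∈ satBuchi T π' → i ∈ satBuchi T (fun m => π' (g m)) := by
    intro i hi j
    obtain ⟨l, hl1, hl2⟩ := htfun2 i hi j
    refine ⟨p (l + 1), le_trans (le_trans hl1 (Nat.le_succ l)) (hpge (l + 1)), ?_⟩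
    have hA := hgseg l (p (l + 1)) (le_of_lt (hpmono l)) le_rfl
    show π' (g (p (l + 1))) ∈ T i
    rw [hA, show p (l + 1) - p l = len l from by rw [hpS]; omega,
      hlen1 l, he3 l, ← hl2]
    exact (hkspec l).2.2.2
  have hsatsup : ∀ i, i ∈ satBuchi T (fun m => π' (g m)) → i ∈ satBuchi T π' := by
    intro i hi
    by_contra hni
    obtain ⟨m, hm1, hm2⟩ := hi (p 1)
    have h1 := hblk1 m
    have h2 := hblk2 m
    have hl1 : 1 ≤ blk m := by
      by_contra hc
      push_neg at hc
      have hb0 : blk m = 0 := by omega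
      rw [hb0] at h2
      have : p (0 + 1) = p 1 := rfl
      omega
    exact hcondi (blk m) hl1 i hni m h1 (by omega) hm2
  have hsateq : satBuchi T (fun m => π' (g m)) = satBuchi T π' :=
    Set.ext fun i => ⟨hsatsup i, hsatsub i⟩
  -- assemble
  refine ⟨fun m => π' (g m), g, p, hplayπ, hπ0, fun m => rfl, hsateq,
    hp0, fun l => le_of_lt (hpmono l),
    fun N => ⟨N + 1, lt_of_lt_of_le (Nat.lt_succ_self N) (hpge (N + 1))⟩,
    hsimple, hcondi, ?_⟩
  intro l l' hne hpar m m' h1 h2 h3 h4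
  rcases Nat.lt_trichotomy l l' with h | h | h
  · have hll : l + 2 ≤ l' := by omega
    exact (hcondii l l' hll m m' h1 h2 h3 h4).symm
  · exact absurd h hne
  · have hll : l' + 2 ≤ l := by omega
    exact hcondii l' l hll m' m h3 h4 h1 h2

end Play

/-- Well-structured Nash-equilibrium outcomes in Büchi games when no
vertex occurs infinitely often.  The infinite decomposition `(sg_0, sg_1, …)` of
`π` is encoded by its cut positions `p`, with `sg_l = π[p l .. p (l+1)]`. -/
theorem buchi_decomposition_no_infinitely_occurring
    (V : Type) (n : ℕ) (A : Arena V n) (T : Fin n → Set V) (v0 : V)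
    (σ' : Fin n → A.Strategy)
    (hNE : A.IsNEObj (fun i => BuchiObj (T i)) σ' v0)
    (π' : ℕ → V) (hπ' : outcome A σ' v0 = π')
    (hfin : ∀ v, ∃ j, ∀ k, j ≤ k → π' k ≠ v)
    (hsat : (satBuchi T π').Nonempty) :
    ∃ (σ : Fin n → A.Strategy) (π : ℕ → V) (p : ℕ → ℕ),
      A.IsNEObj (fun i => BuchiObj (T i)) σ v0 ∧
      outcome A σ v0 = π ∧
      satBuchi T π = satBuchi T π' ∧
      -- cut positions of the (genuine, unbounded) decomposition
      p 0 = 0 ∧ (∀ l, p l ≤ p (l + 1)) ∧ (∀ N, ∃ l, N < p l) ∧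
      -- the decomposition is simple
      (∀ l, SimpleSeg π (p l) (p (l + 1))) ∧
      -- (i): targets of losing players do not occur in `sg_l`, l ≥ 1
      (∀ l, 1 ≤ l → ∀ i, i ∉ satBuchi T π →
        ∀ m, p l ≤ m → m ≤ p (l + 1) → π m ∉ T i) ∧
      -- (ii): segments of the same parity are vertex-disjoint
      (∀ l l', l ≠ l' → l % 2 = l' % 2 →
        ∀ m m', p l ≤ m → m ≤ p (l + 1) → p l' ≤ m' → m' ≤ p (l' + 1) →
          π m ≠ π m') := by
  have hplay' : A.IsPlay π' := hπ' ▸ isPlay_outcome A σ' v0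
  obtain ⟨π, g, p, hplayπ, hπ0, hgm, hsateq, hp0, hpm, hpunb, hsimple, hcondi,
    hcondii⟩ := construct_play A T π' hplay' hfin hsat
  have h0 : π 0 = v0 := by rw [hπ0, ← hπ']; rfl
  obtain ⟨σ, hNEσ, hout⟩ :=
    construct_NE A T v0 σ' hNE π' hπ' π g hplayπ h0 hgm hsateq
  refine ⟨σ, π, p, hNEσ, hout, hsateq, hp0, hpm, hpunb, hsimple, ?_, hcondii⟩
  intro l hl i hi m h1 h2
  exact hcondi l hl i (by rwa [hsateq] at hi) m h1 h2
end

section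
/- Let G be an n-player co-Büchi game on a possibly infinite arena, where player i's objective is coBüchi(T_i) for a set T_i ⊆ V, and let σ' be a Nash equilibrium from a vertex v_0. Then there exists a Nash equilibrium σ from v_0 in which every strategy is finite-memory and such that Sat(out(σ', v_0)) ⊆ Sat(out(σ, v_0)). Moreover, if the arena is finite, the strategies of σ can be taken with memory size at most |V| + 2n. -/
open scoped ENNReal Classical

open Arena

/-!
Call a play admissible if it starts at `v0` and no player losing along it ever enters their
own winning region against the coalition of the others; an equilibrium outcome is admissible,
since a loser could otherwise deviate there and win. Among admissible plays choose one, `η`,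
whose set of winners is maximal and contains that of the given outcome. From some position on,
no winner of `η` visits their target, and by maximality every play through the later vertices
of `η` has exactly the winners of `η`. The new equilibrium follows a simple path to that tail
and then a fixed successor function on it. Whoever leaves this track is punished by the
coalition with a positional strategy descending along the (transfinite) attractor ranks to the
target, which forces infinitely many visits of it. The memory is a position on the simple
path (at most `|V|` states), the owner of the last vertex in the tail, or the punished player.
-/

namespace Arena

variable {V : Type} {n : ℕ} {A : Arena V n}

def shift (π : ℕ → V) (k : ℕ) : ℕ → V := fun m => π (m + k)

@[simp] lemma shift_apply (π : ℕ → V) (k m : ℕ) : shift π k m = π (m + k) := rfl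

lemma IsPlay.shift {π : ℕ → V} (h : A.IsPlay π) (k : ℕ) : A.IsPlay (shift π k) := fun j => by
  simpa [Nat.add_right_comm] using h (j + k)

@[simp] lemma shift_mem_coBuchiObj_iff {T : Set V} {π : ℕ → V} {k : ℕ} :
    shift π k ∈ CoBuchiObj T ↔ π ∈ CoBuchiObj T := by
  refine ⟨fun ⟨j, hj⟩ => ⟨j + k, fun m hm => ?_⟩,
    fun ⟨j, hj⟩ => ⟨j, fun m _ => hj (m + k) (by omega)⟩⟩
  simpa [Nat.sub_add_cancel (by omega : k ≤ m)] using hj (m - k) (by omega)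

lemma mem_coBuchiObj_iff_eventually {T : Set V} {π : ℕ → V} :
    π ∈ CoBuchiObj T ↔ ∀ᶠ k in Filter.atTop, π k ∉ T :=
  Filter.eventually_atTop.symm

@[simp] lemma satCoBuchi_shift (T : Fin n → Set V) (π : ℕ → V) (k : ℕ) :
    satCoBuchi T (shift π k) = satCoBuchi T π :=
  Set.ext fun _ => shift_mem_coBuchiObj_iff

lemma pref_succ (π : ℕ → V) (j : ℕ) : pref π (j + 1) = pref π j ++ [π j] := by
  simp [pref, List.range_succ]

@[simp] lemma length_pref (π : ℕ → V) (j : ℕ) : (pref π j).length = j := by simp [pref]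

@[simp] lemma getElem_pref (π : ℕ → V) {j q : ℕ} (hq : q < (pref π j).length) :
    (pref π j)[q] = π q := by
  simp [pref]

lemma pref_congr {π π' : ℕ → V} {j : ℕ} (h : ∀ m < j, π m = π' m) : pref π j = pref π' j :=
  List.map_congr_left fun m hm => h m (List.mem_range.mp hm)

lemma drop_pref (π : ℕ → V) (k m : ℕ) : (pref π (m + k)).drop k = pref (shift π k) m := by
  apply List.ext_getElem (by simp)
  intro q _ _
  simp [Nat.add_comm k q]

lemma outcome_succ (σ : Fin n → A.Strategy) (v0 : V) (j : ℕ) :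
    outcome A σ v0 (j + 1) =
      (σ (A.owner (outcome A σ v0 j))).next (pref (outcome A σ v0) j) (outcome A σ v0 j) := by
  have hfst : ∀ j, (outcomeAux A σ v0 j).1 = pref (outcome A σ v0) j := by
    intro j
    induction j with
    | zero => rfl
    | succ m ih => rw [pref_succ, ← ih]; rfl
  rw [outcome, outcomeAux, hfst]
  rfl

lemma outcome_isPlay (σ : Fin n → A.Strategy) (v0 : V) : A.IsPlay (outcome A σ v0) :=
  fun j => outcome_succ σ v0 j ▸ (σ _).valid _ _

lemma consistent_outcome (σ : Fin n → A.Strategy) (v0 : V) (i : Fin n) :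
    A.Consistent i (σ i) (outcome A σ v0) :=
  fun j hj => hj ▸ outcome_succ σ v0 j

lemma outcome_eq_of_succ {σ : Fin n → A.Strategy} {v0 : V} {π : ℕ → V} (h0 : π 0 = v0)
    (hstep : ∀ j, π (j + 1) = (σ (A.owner (π j))).next (pref π j) (π j)) :
    outcome A σ v0 = π := by
  funext m
  induction m using Nat.strong_induction_on with
  | _ m ih =>
    match m with
    | 0 => exact h0.symm
    | j + 1 => rw [outcome_succ, hstep j, pref_congr fun q hq => ih q (by omega), ih j (by omega)]

lemma outcome_update_eq_of_le {σ : Fin n → A.Strategy} {i : Fin n} {τ : A.Strategy} {v0 : V}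
    {p : ℕ} (h : ∀ j < p, A.owner (outcome A σ v0 j) = i →
      τ.next (pref (outcome A σ v0) j) (outcome A σ v0 j) =
        (σ i).next (pref (outcome A σ v0) j) (outcome A σ v0 j)) :
    ∀ j ≤ p, outcome A (Function.update σ i τ) v0 j = outcome A σ v0 j := by
  intro j
  induction j using Nat.strong_induction_on with
  | _ j ih =>
    match j with
    | 0 => exact fun _ => rfl
    | j + 1 =>
      intro hj
      rw [outcome_succ, outcome_succ, pref_congr fun q hq => ih q (by omega) (by omega),
        ih j (by omega) (by omega)]
      by_cases hown : A.owner (outcome A σ v0 j) = i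
      · rw [hown, Function.update_self]
        exact h j (by omega) hown
      · rw [Function.update_of_ne hown]

instance : Nonempty A.Strategy :=
  ⟨⟨fun _ v => (A.no_deadlock v).choose, fun _ v => (A.no_deadlock v).choose_spec⟩⟩

noncomputable def succWith (A : Arena V n) (P : V → V → Prop) (v : V) : V :=
  if h : ∃ w, A.E v w ∧ P v w then h.choose else (A.no_deadlock v).choose

lemma edge_succWith (P : V → V → Prop) (v : V) : A.E v (A.succWith P v) := by
  unfold succWith
  split_ifs with h
  exacts [h.choose_spec.1, (A.no_deadlock v).choose_spec]

lemma succWith_spec {P : V → V → Prop} {v : V} (h : ∃ w, A.E v w ∧ P v w) :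
    P v (A.succWith P v) := by
  rw [succWith, dif_pos h]
  exact h.choose_spec.2

noncomputable def Strategy.ofSuccWith (P : V → V → Prop) : A.Strategy :=
  ⟨fun _ v => A.succWith P v, fun _ v => edge_succWith P v⟩

def winRegion (A : Arena V n) (i : Fin n) (Ω : Set (ℕ → V)) : Set V :=
  {v | ∃ σ : A.Strategy, ∀ π, A.IsPlay π → π 0 = v → A.Consistent i σ π → π ∈ Ω}

noncomputable def winStrat (A : Arena V n) (i : Fin n) (Ω : Set (ℕ → V)) (v : V) : A.Strategy :=
  Classical.epsilon fun σ : A.Strategy =>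
    ∀ π, A.IsPlay π → π 0 = v → A.Consistent i σ π → π ∈ Ω

lemma winStrat_spec {i : Fin n} {Ω : Set (ℕ → V)} {v : V} (hv : v ∈ A.winRegion i Ω) :
    ∀ π, A.IsPlay π → π 0 = v → A.Consistent i (A.winStrat i Ω v) π → π ∈ Ω :=
  Classical.epsilon_spec hv

/-- Play `σ` until the first visit to `C`, at `w` say, then `τ w` on the history counted from
that visit. -/
noncomputable def Strategy.switchOn (σ : A.Strategy) (C : Set V) (τ : V → A.Strategy) :
    A.Strategy where
  next h u :=
    let p := (h ++ [u]).findIdx (· ∈ C)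
    if hp : p < (h ++ [u]).length then (τ (h ++ [u])[p]).next (h.drop p) u else σ.next h u
  valid h u := by
    dsimp only
    split_ifs
    exacts [Strategy.valid _ _ _, σ.valid h u]

lemma findIdx_pref_eq {π : ℕ → V} {C : Set V} {p j : ℕ} (hpj : p ≤ j) (hp : π p ∈ C)
    (hbefore : ∀ q < p, π q ∉ C) : (pref π (j + 1)).findIdx (· ∈ C) = p := by
  rw [List.findIdx_eq (by simp; omega)]
  simpa using ⟨hp, fun q hq => hbefore q hq⟩

lemma findIdx_pref_eq_length {π : ℕ → V} {C : Set V} {j : ℕ} (h : ∀ q ≤ j, π q ∉ C) :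
    (pref π (j + 1)).findIdx (· ∈ C) = j + 1 := by
  refine (List.findIdx_eq_length.mpr fun x hx => ?_).trans (length_pref π (j + 1))
  obtain ⟨q, hq, rfl⟩ := List.mem_map.mp hx
  simpa using h q (by simpa [Nat.lt_succ_iff] using hq)

section switchOn

variable {i : Fin n} {σ : A.Strategy} {C : Set V} {τ : V → A.Strategy} {π : ℕ → V}

lemma Strategy.switchOn_next_of_forall_notMem {j : ℕ} (h : ∀ q ≤ j, π q ∉ C) :
    (σ.switchOn C τ).next (pref π j) (π j) = σ.next (pref π j) (π j) := by
  simp only [Strategy.switchOn, ← pref_succ, findIdx_pref_eq_length h, length_pref,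
    lt_irrefl, dite_false]

lemma Consistent.shift_of_switchOn (hc : A.Consistent i (σ.switchOn C τ) π) {p : ℕ}
    (hp : π p ∈ C) (hbefore : ∀ q < p, π q ∉ C) : A.Consistent i (τ (π p)) (shift π p) := by
  intro j hj
  have hidx := findIdx_pref_eq (π := π) (j := j + p) (by omega) hp hbefore
  simp only [shift_apply, Nat.add_right_comm j 1 p] at hj ⊢
  rw [hc (j + p) hj]
  simp only [Strategy.switchOn, ← pref_succ, length_pref, hidx, getElem_pref, drop_pref]
  rw [dif_pos (by omega)]

lemma Consistent.of_switchOn (hc : A.Consistent i (σ.switchOn C τ) π) (h : ∀ q, π q ∉ C) :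
    A.Consistent i σ π := fun j hj =>
  (hc j hj).trans (Strategy.switchOn_next_of_forall_notMem fun q _ => h q)

end switchOn

section winRegion

variable {i : Fin n} {Ω : Set (ℕ → V)}

lemma mem_of_consistent_switchOn_winStrat (hΩ : ∀ π k, shift π k ∈ Ω → π ∈ Ω)
    {σ : A.Strategy} {π : ℕ → V} (hπ : A.IsPlay π)
    (hc : A.Consistent i (σ.switchOn (A.winRegion i Ω) (A.winStrat i Ω)) π)
    {m : ℕ} (hm : π m ∈ A.winRegion i Ω) : π ∈ Ω := by
  have hex : ∃ m, π m ∈ A.winRegion i Ω := ⟨m, hm⟩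
  exact hΩ π _ <| winStrat_spec (Nat.find_spec hex) _ (hπ.shift _) (by simp)
    (hc.shift_of_switchOn (Nat.find_spec hex) fun q hq => Nat.find_min hex hq)

theorem mem_winRegion_of_forall_notMem (hΩ : ∀ π k, shift π k ∈ Ω → π ∈ Ω) {v : V}
    (σ : A.Strategy) (hσ : ∀ π, A.IsPlay π → π 0 = v → A.Consistent i σ π →
      (∀ m, π m ∉ A.winRegion i Ω) → π ∈ Ω) : v ∈ A.winRegion i Ω := by
  refine ⟨σ.switchOn (A.winRegion i Ω) (A.winStrat i Ω), fun π hπ h0 hc => ?_⟩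
  by_cases hvisit : ∃ m, π m ∈ A.winRegion i Ω
  · obtain ⟨m, hm⟩ := hvisit
    exact mem_of_consistent_switchOn_winStrat hΩ hπ hc hm
  · rw [not_exists] at hvisit
    exact hσ π hπ h0 (hc.of_switchOn hvisit) hvisit

lemma mem_winRegion_of_edge (hΩ : ∀ π k, shift π k ∈ Ω → π ∈ Ω) {v w : V}
    (hv : A.owner v = i) (hvw : A.E v w) (hw : w ∈ A.winRegion i Ω) :
    v ∈ A.winRegion i Ω := by
  refine mem_winRegion_of_forall_notMem hΩ (.ofSuccWith fun _ w => w ∈ A.winRegion i Ω)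
    fun π _ h0 hc hπ => absurd ?_ (hπ 1)
  rw [hc 0 (h0 ▸ hv), h0]
  exact succWith_spec (P := fun _ w => w ∈ A.winRegion i Ω) ⟨w, hvw, hw⟩

lemma mem_winRegion_of_forall_edge (hΩ : ∀ π k, shift π k ∈ Ω → π ∈ Ω) {v : V}
    (h : ∀ w, A.E v w → w ∈ A.winRegion i Ω) :
    v ∈ A.winRegion i Ω :=
  mem_winRegion_of_forall_notMem hΩ (Classical.arbitrary _)
    fun _ hπ h0 _ hnot => absurd (h _ (h0 ▸ hπ 0)) (hnot 1)

/-- Player `i` would otherwise profit by switching to a winning strategy on reaching the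
region. -/
theorem IsNEObj.mem_of_visit_winRegion {Ω : Fin n → Set (ℕ → V)} {σ : Fin n → A.Strategy}
    {v0 : V} (hNE : A.IsNEObj Ω σ v0) (hΩ : ∀ π k, shift π k ∈ Ω i → π ∈ Ω i) {k : ℕ}
    (hk : outcome A σ v0 k ∈ A.winRegion i (Ω i)) : outcome A σ v0 ∈ Ω i := by
  have hex : ∃ m, outcome A σ v0 m ∈ A.winRegion i (Ω i) := ⟨k, hk⟩
  set τ := (σ i).switchOn (A.winRegion i (Ω i)) (A.winStrat i (Ω i))
  have hagree := outcome_update_eq_of_le (τ := τ) (p := Nat.find hex) fun j hj _ =>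
    Strategy.switchOn_next_of_forall_notMem fun q hq => Nat.find_min hex (by omega)
  refine hNE i τ (mem_of_consistent_switchOn_winStrat (i := i) (σ := σ i) hΩ (outcome_isPlay _ _) ?_
    (m := Nat.find hex) ?_)
  · simpa using consistent_outcome (Function.update σ i τ) v0 i
  · rw [hagree _ le_rfl]
    exact Nat.find_spec hex

end winRegion

lemma coBuchiObj_prepend (T : Set V) : ∀ π k, shift π k ∈ CoBuchiObj T → π ∈ CoBuchiObj T :=
  fun _ _ => shift_mem_coBuchiObj_iff.mp

section punisher

variable (A) (i : Fin n) (T : Set V)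

/-- The controllable predecessor of `X` for the coalition of the opponents of `i`. -/
def cpre (X : Set V) : Set V :=
  {v | (A.owner v = i → ∀ w, A.E v w → w ∈ X) ∧ (A.owner v ≠ i → ∃ w, A.E v w ∧ w ∈ X)}

lemma cpre_mono : Monotone (A.cpre i) := fun _ _ hXY _ ⟨h1, h2⟩ =>
  ⟨fun ho w hw => hXY (h1 ho w hw), fun ho => (h2 ho).imp fun _ hw => ⟨hw.1, hXY hw.2⟩⟩

/-- The opponents' attractor to `T`, computed inside the region where `i` cannot win. -/
def attractorStep : Set V →o Set V where
  toFun X := (A.winRegion i (CoBuchiObj T))ᶜ ∩ (T ∪ A.cpre i X)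
  monotone' _ _ hXY := Set.inter_subset_inter_right _ (Set.union_subset_union_right _
    (A.cpre_mono i hXY))

variable {A i T} in
@[simp] lemma mem_attractorStep {X : Set V} {v : V} :
    v ∈ A.attractorStep i T X ↔ v ∉ A.winRegion i (CoBuchiObj T) ∧ (v ∈ T ∨ v ∈ A.cpre i X) :=
  Iff.rfl

noncomputable def attractorRank (v : V) : Ordinal.{0} :=
  sInf {a | v ∈ OrdinalApprox.lfpApprox (A.attractorStep i T) ⊥ a}

/-- Outside the attractor, player `i` can stay outside it and so avoid `T` until reaching
the winning region: the attractor is the whole losing region. -/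
theorem lfp_attractorStep : (A.attractorStep i T).lfp = (A.winRegion i (CoBuchiObj T))ᶜ := by
  refine le_antisymm ((A.attractorStep i T).lfp_le Set.inter_subset_left) fun v hv => ?_
  obtain ⟨Q, hQ⟩ : ∃ Q, (A.attractorStep i T).lfp = Q := ⟨_, rfl⟩
  have hfix : A.attractorStep i T Q = Q := hQ ▸ (A.attractorStep i T).map_lfp
  rw [hQ]
  by_contra hvQ
  refine hv <| mem_winRegion_of_forall_notMem (coBuchiObj_prepend T)
    (.ofSuccWith fun _ w => w ∉ Q) fun π hπ h0 hc hnot => ?_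
  have hstep : ∀ m, π m ∉ Q → π m ∉ T ∧ π (m + 1) ∉ Q := by
    intro m hm
    rw [← hfix, mem_attractorStep, not_and, not_or] at hm
    obtain ⟨hT, hcpre⟩ := hm (hnot m)
    refine ⟨hT, ?_⟩
    by_cases ho : A.owner (π m) = i
    · have hex : ∃ w, A.E (π m) w ∧ w ∉ Q := by
        by_contra! h
        exact hcpre ⟨fun _ => h, fun ho' => absurd ho ho'⟩
      rw [hc m ho]
      exact succWith_spec (P := fun _ w => w ∉ Q) hex
    · exact fun h => hcpre ⟨fun ho' => absurd ho' ho, fun _ => ⟨_, hπ m, h⟩⟩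
  have hout : ∀ m, π m ∉ Q := by
    intro m
    induction m with
    | zero => exact h0 ▸ hvQ
    | succ m ih => exact (hstep m ih).2
  exact ⟨0, fun m _ => (hstep m (hout m)).1⟩

variable {A i T}

theorem mem_cpre_attractorRank_lt {v : V} (hv : v ∉ A.winRegion i (CoBuchiObj T))
    (hT : v ∉ T) :
    v ∈ A.cpre i {w | w ∉ A.winRegion i (CoBuchiObj T) ∧
      A.attractorRank i T w < A.attractorRank i T v} := by
  have hne : {a | v ∈ OrdinalApprox.lfpApprox (A.attractorStep i T) ⊥ a}.Nonempty := by
    obtain ⟨a, ha⟩ := OrdinalApprox.lfp_mem_range_lfpApprox (A.attractorStep i T)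
    refine ⟨a, ?_⟩
    rw [Set.mem_ofPred_eq, ha, lfp_attractorStep]
    exact hv
  have hmem := csInf_mem hne
  rw [Set.mem_ofPred_eq, OrdinalApprox.lfpApprox] at hmem
  simp only [Set.sup_eq_union, Set.bot_eq_empty, Set.empty_union, Set.iSup_eq_iUnion,
    Set.mem_iUnion] at hmem
  obtain ⟨b, hb, hvb⟩ := hmem
  have hsub : OrdinalApprox.lfpApprox (A.attractorStep i T) ⊥ b ⊆
      {w | w ∉ A.winRegion i (CoBuchiObj T) ∧
        A.attractorRank i T w < A.attractorRank i T v} := by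
    intro w hw
    refine ⟨?_, lt_of_le_of_lt (csInf_le' hw) hb⟩
    have hle := OrdinalApprox.lfpApprox_le_of_mem_fixedPoints _
      (A.attractorStep i T).isFixedPt_lfp bot_le b hw
    rwa [lfp_attractorStep] at hle
  exact A.cpre_mono i hsub ((mem_attractorStep.mp hvb).2.resolve_left hT)

variable (A i T)

noncomputable def punisher : V → V :=
  A.succWith fun v w =>
    w ∉ A.winRegion i (CoBuchiObj T) ∧ (v ∉ T → A.attractorRank i T w < A.attractorRank i T v)

variable {A i T}

lemma punisher_spec {v : V} (hv : v ∉ A.winRegion i (CoBuchiObj T)) (ho : A.owner v ≠ i) :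
    A.punisher i T v ∉ A.winRegion i (CoBuchiObj T) ∧
      (v ∉ T → A.attractorRank i T (A.punisher i T v) < A.attractorRank i T v) := by
  refine succWith_spec (P := fun v w => w ∉ A.winRegion i (CoBuchiObj T) ∧
    (v ∉ T → A.attractorRank i T w < A.attractorRank i T v)) ?_
  by_cases hT : v ∈ T
  · by_contra h
    exact hv (mem_winRegion_of_forall_edge (coBuchiObj_prepend T) fun w hw =>
      by_contra fun hw' => h ⟨w, hw, hw', absurd hT⟩)
  · obtain ⟨w, hw, hw'⟩ := (mem_cpre_attractorRank_lt hv hT).2 ho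
    exact ⟨w, hw, hw'.1, fun _ => hw'.2⟩

/-- Between visits of `T` the attractor rank strictly decreases. -/
theorem notMem_coBuchiObj_of_punisher {ξ : ℕ → V} (hξ : A.IsPlay ξ)
    (h0 : ξ 0 ∉ A.winRegion i (CoBuchiObj T))
    (hfollow : ∀ m, A.owner (ξ m) ≠ i → ξ (m + 1) = A.punisher i T (ξ m)) :
    ξ ∉ CoBuchiObj T := by
  have hlose : ∀ m, ξ m ∉ A.winRegion i (CoBuchiObj T) := by
    intro m
    induction m with
    | zero => exact h0
    | succ m ih =>
      by_cases ho : A.owner (ξ m) = i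
      · exact fun h => ih (mem_winRegion_of_edge (coBuchiObj_prepend T) ho (hξ m) h)
      · exact hfollow m ho ▸ (punisher_spec ih ho).1
  rintro ⟨M, hM⟩
  obtain ⟨t, ht⟩ := WellFounded.not_rel_apply_succ (r := (· < ·))
    fun t => A.attractorRank i T (ξ (M + t))
  have hT : ξ (M + t) ∉ T := hM _ (by omega)
  apply ht
  by_cases ho : A.owner (ξ (M + t)) = i
  · exact ((mem_cpre_attractorRank_lt (hlose _) hT).1 ho _ (hξ _)).2
  · rw [← Nat.add_assoc, hfollow _ ho]
    exact (punisher_spec (hlose _) ho).2 hT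

end punisher

theorem exists_injOn_path {R : V → V → Prop} {p : ℕ → V} {N : ℕ}
    (hp : ∀ m < N, R (p m) (p (m + 1))) :
    ∃ (q : ℕ → V) (M : ℕ), q 0 = p 0 ∧ q M = p N ∧ (∀ m < M, R (q m) (q (m + 1))) ∧
      (∀ m, q m ∈ Set.range p) ∧ Set.InjOn q (Set.Iic M) := by
  have hex : ∃ M, ∃ q : ℕ → V, q 0 = p 0 ∧ q M = p N ∧ (∀ m < M, R (q m) (q (m + 1))) ∧
      ∀ m, q m ∈ Set.range p := ⟨N, p, rfl, rfl, hp, fun m => ⟨m, rfl⟩⟩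
  obtain ⟨q, hq0, hqM, hqR, hqp⟩ := Nat.find_spec hex
  refine ⟨q, Nat.find hex, hq0, hqM, hqR, hqp, fun a ha b hb hab => ?_⟩
  simp only [Set.mem_Iic] at ha hb
  by_contra hne
  wlog hlt : a < b generalizing a b
  · exact this b a hab.symm hb ha (Ne.symm hne) (by omega)
  -- cut out the loop between positions `a` and `b`
  set q' : ℕ → V := fun m => if m ≤ a then q m else q (m + (b - a))
  refine Nat.find_min hex (m := Nat.find hex - (b - a)) (by omega)
    ⟨q', by simp [q', hq0], ?_, ?_, fun m => ?_⟩
  · simp only [q']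
    split_ifs with h
    · rwa [show Nat.find hex - (b - a) = a by omega, hab, show b = Nat.find hex by omega]
    · rwa [show Nat.find hex - (b - a) + (b - a) = Nat.find hex by omega]
  · intro m hm
    by_cases hma : m < a
    · simpa [q', hma.le, Nat.succ_le_of_lt hma] using hqR m (by omega)
    by_cases hma' : m = a
    · subst hma'
      simpa [q', hab, show m + 1 + (b - m) = b + 1 by omega] using hqR b (by omega)
    · simpa [q', show ¬ m ≤ a by omega, show ¬ m + 1 ≤ a by omega, Nat.add_right_comm m 1]
        using hqR (m + (b - a)) (by omega)
  · simp only [q']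
    split_ifs
    exacts [hqp m, hqp _]

def splice (η ξ : ℕ → V) (q : ℕ) : ℕ → V := fun m => if m < q then η m else ξ (m - q)

lemma shift_splice (η ξ : ℕ → V) (q : ℕ) : shift (splice η ξ q) q = ξ := by
  funext m
  simp [splice]

lemma splice_zero {η ξ : ℕ → V} {q : ℕ} (hq : η q = ξ 0) : splice η ξ q 0 = η 0 := by
  rcases Nat.eq_zero_or_pos q with rfl | hq0
  · simp [splice, hq]
  · simp [splice, hq0]

lemma IsPlay.splice {η ξ : ℕ → V} (hη : A.IsPlay η) (hξ : A.IsPlay ξ) {q : ℕ}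
    (hq : η q = ξ 0) : A.IsPlay (splice η ξ q) := by
  intro m
  simp only [Arena.splice]
  rcases lt_trichotomy (m + 1) q with h | h | h
  · simpa [h, show m < q by omega] using hη m
  · simpa [h, show m < q by omega, ← hq] using hη m
  · simpa [show ¬ m < q by omega, show ¬ m + 1 < q by omega, show m + 1 - q = m - q + 1 by omega]
      using hξ (m - q)

section plan

variable {T : Fin n → Set V} {v0 : V}

def LosersAvoidWinRegions (A : Arena V n) (T : Fin n → Set V) (η : ℕ → V) : Prop :=
  ∀ i ∉ satCoBuchi T η, ∀ m, η m ∉ A.winRegion i (CoBuchiObj (T i))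

def Admissible (A : Arena V n) (T : Fin n → Set V) (v0 : V) (η : ℕ → V) : Prop :=
  A.IsPlay η ∧ η 0 = v0 ∧ A.LosersAvoidWinRegions T η

lemma IsNEObj.admissible_outcome {σ : Fin n → A.Strategy}
    (hNE : A.IsNEObj (fun i => CoBuchiObj (T i)) σ v0) :
    A.Admissible T v0 (outcome A σ v0) :=
  ⟨outcome_isPlay σ v0, rfl,
    fun i hi _ hm => hi (hNE.mem_of_visit_winRegion (coBuchiObj_prepend (T i)) hm)⟩

theorem Admissible.exists_maximal {π : ℕ → V} (hπ : A.Admissible T v0 π) :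
    ∃ η, A.Admissible T v0 η ∧ satCoBuchi T π ⊆ satCoBuchi T η ∧
      ∀ η', A.Admissible T v0 η' → satCoBuchi T η ⊆ satCoBuchi T η' →
        satCoBuchi T η' ⊆ satCoBuchi T η := by
  obtain ⟨η, ⟨hη, hπη⟩, hmax⟩ := Set.Finite.exists_maximalFor' (satCoBuchi T)
    {η | A.Admissible T v0 η ∧ satCoBuchi T π ⊆ satCoBuchi T η} (Set.toFinite _)
    ⟨π, hπ, subset_rfl⟩
  exact ⟨η, hη, hπη, fun η' h1 h2 => hmax ⟨h1, hπη.trans h2⟩ h2⟩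

/-- Past the last visits of the winners' targets, a play through the tail of `η`, spliced
after a prefix of `η`, is admissible; maximality bounds its winners. -/
theorem Admissible.exists_satCoBuchi_eq_of_maximal {η : ℕ → V} (hη : A.Admissible T v0 η)
    (hmax : ∀ η', A.Admissible T v0 η' → satCoBuchi T η ⊆ satCoBuchi T η' →
      satCoBuchi T η' ⊆ satCoBuchi T η) :
    ∃ N0, ∀ ξ, A.IsPlay ξ → (∀ m, ξ m ∈ η '' Set.Ici N0) → satCoBuchi T ξ = satCoBuchi T η := by
  have hev : ∀ᶠ k in Filter.atTop, ∀ j ∈ satCoBuchi T η, η k ∉ T j :=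
    Filter.eventually_all.mpr fun j =>
      Filter.eventually_imp_distrib_left.mpr fun hj => mem_coBuchiObj_iff_eventually.mp hj
  obtain ⟨N0, hN0⟩ := Filter.eventually_atTop.mp hev
  refine ⟨N0, fun ξ hξ hξO => ?_⟩
  have hwin : satCoBuchi T η ⊆ satCoBuchi T ξ := fun j hj => ⟨0, fun m _ => by
    obtain ⟨k, hk, hkm⟩ := hξO m
    exact hkm ▸ hN0 k hk j hj⟩
  refine subset_antisymm ?_ hwin
  obtain ⟨q, -, hq⟩ := hξO 0
  have hsat : satCoBuchi T (splice η ξ q) = satCoBuchi T ξ := by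
    rw [← satCoBuchi_shift T _ q, shift_splice]
  rw [← hsat]
  refine hmax _ ⟨hη.1.splice hξ hq, splice_zero hq ▸ hη.2.1, fun j hj m => ?_⟩ (hsat ▸ hwin)
  have hjη : j ∉ satCoBuchi T η := fun h => hj (hsat ▸ hwin h)
  simp only [splice]
  split_ifs
  · exact hη.2.2 j hjη m
  · obtain ⟨k, -, hk⟩ := hξO (m - q)
    exact hk ▸ hη.2.2 j hjη k

/-- A play `ρ` from `v0` that runs along an injective prefix of length `N` and then follows
the successor function `f` inside a region `O` through which no play makes a loser of `ρ` win. -/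
structure NEPlan (A : Arena V n) (T : Fin n → Set V) (v0 : V) where
  ρ : ℕ → V
  N : ℕ
  O : Set V
  f : V → V
  isPlay : A.IsPlay ρ
  ρ_zero : ρ 0 = v0
  injOn : Set.InjOn ρ (Set.Iic N)
  mem_O : ∀ m, N ≤ m → ρ m ∈ O
  ρ_succ : ∀ m, N ≤ m → ρ (m + 1) = f (ρ m)
  edge_f : ∀ v, A.E v (f v)
  mapsTo_f : Set.MapsTo f O O
  losersAvoid : A.LosersAvoidWinRegions T ρ
  losersAvoid_O : ∀ i ∉ satCoBuchi T ρ, ∀ v ∈ O, v ∉ A.winRegion i (CoBuchiObj (T i))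
  satCoBuchi_subset : ∀ ξ, A.IsPlay ξ → (∀ m, ξ m ∈ O) → satCoBuchi T ξ ⊆ satCoBuchi T ρ

def pathThen (q : ℕ → V) (M : ℕ) (f : V → V) : ℕ → V :=
  fun m => if m < M then q m else f^[m - M] (q M)

section pathThen

variable {q : ℕ → V} {M : ℕ} {f : V → V}

lemma pathThen_of_le {m : ℕ} (hm : m ≤ M) : pathThen q M f m = q m := by
  rcases hm.lt_or_eq with h | rfl
  · simp [pathThen, h]
  · simp [pathThen]

lemma pathThen_succ {m : ℕ} (hm : M ≤ m) : pathThen q M f (m + 1) = f (pathThen q M f m) := by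
  simp only [pathThen, show ¬ m < M by omega, show ¬ m + 1 < M by omega, if_false,
    show m + 1 - M = m - M + 1 by omega, Function.iterate_succ_apply']

lemma pathThen_mem {O : Set V} (hf : Set.MapsTo f O O) (hq : q M ∈ O) {m : ℕ} (hm : M ≤ m) :
    pathThen q M f m ∈ O := by
  simp only [pathThen, show ¬ m < M by omega, if_false]
  exact hf.iterate _ hq

lemma isPlay_pathThen (hq : ∀ m < M, A.E (q m) (q (m + 1))) (hf : ∀ v, A.E v (f v)) :
    A.IsPlay (pathThen q M f) := fun m => by
  rcases lt_or_ge m M with h | h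
  · rw [pathThen_of_le h.le, pathThen_of_le h]
    exact hq m h
  · rw [pathThen_succ h]
    exact hf _

end pathThen

theorem IsNEObj.exists_nePlan {σ : Fin n → A.Strategy}
    (hNE : A.IsNEObj (fun i => CoBuchiObj (T i)) σ v0) :
    ∃ P : A.NEPlan T v0, satCoBuchi T (outcome A σ v0) ⊆ satCoBuchi T P.ρ := by
  obtain ⟨η, hη, hπη, hmax⟩ := hNE.admissible_outcome.exists_maximal
  obtain ⟨N0, hN0⟩ := hη.exists_satCoBuchi_eq_of_maximal hmax
  set O := η '' Set.Ici N0
  have hOη : ∀ v ∈ O, v ∈ Set.range η := fun _ ⟨k, _, hk⟩ => ⟨k, hk⟩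
  set f := A.succWith fun _ w => w ∈ O
  have hf : Set.MapsTo f O O := by
    rintro _ ⟨m, hm, rfl⟩
    exact succWith_spec (P := fun _ w => w ∈ O)
      ⟨η (m + 1), hη.1 m, m + 1, Set.mem_Ici.mpr (by simp at hm; omega), rfl⟩
  obtain ⟨q, M, hq0, hqM, hqR, hqη, hinj⟩ := exists_injOn_path (N := N0) fun m _ => hη.1 m
  have hρO : ∀ m, M ≤ m → pathThen q M f m ∈ O :=
    fun m => pathThen_mem hf (hqM ▸ ⟨N0, Set.mem_Ici.mpr le_rfl, rfl⟩)
  have hplay : A.IsPlay (pathThen q M f) := isPlay_pathThen hqR (A.edge_succWith _)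
  have hsat : satCoBuchi T (pathThen q M f) = satCoBuchi T η := by
    rw [← satCoBuchi_shift T _ M]
    exact hN0 _ (hplay.shift M) fun m => hρO _ (by omega)
  have hρη : ∀ m, pathThen q M f m ∈ Set.range η := fun m => by
    rcases le_or_gt m M with h | h
    · exact pathThen_of_le h ▸ hqη m
    · exact hOη _ (hρO m h.le)
  refine ⟨⟨pathThen q M f, M, O, f, hplay, by rw [pathThen_of_le (Nat.zero_le _), hq0, hη.2.1],
    ?_, hρO, fun m => pathThen_succ, A.edge_succWith _, hf, ?_, ?_, ?_⟩, hsat ▸ hπη⟩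
  · exact fun a ha b hb hab => hinj ha hb (by rwa [pathThen_of_le ha, pathThen_of_le hb] at hab)
  · intro i hi m
    obtain ⟨k, hk⟩ := hρη m
    exact hk ▸ hη.2.2 i (hsat ▸ hi) k
  · intro i hi v hv
    obtain ⟨k, hk⟩ := hOη v hv
    exact hk ▸ hη.2.2 i (hsat ▸ hi) k
  · intro ξ hξ hξO
    rw [hsat, hN0 ξ hξ hξO]

namespace NEPlan

variable (P : A.NEPlan T v0)

/-- Memory states: `inl c` means that the history so far is `ρ 0, …, ρ (c - 1)`; `inr (inl j)`
that the history has entered `O` and stayed there, its last vertex being owned by `j`;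
`inr (inr j)` that player `j` has deviated and is being punished. -/
abbrev Memory : Type := Fin (P.N + 1) ⊕ Fin n ⊕ Fin n

/-- The owner of the previous vertex, blamed if the current vertex is unexpected. -/
def culprit : P.Memory → Fin n
  | .inl c => A.owner (P.ρ (c - 1))
  | .inr (.inl j) => j
  | .inr (.inr j) => j

def OnTrack : P.Memory → V → Prop
  | .inl c, v => v = P.ρ c
  | .inr (.inl _), v => v ∈ P.O
  | .inr (.inr _), _ => False

def plan : P.Memory → V → V
  | .inl c, _ => P.ρ (c + 1)
  | .inr _, v => P.f v

def advance : P.Memory → V → P.Memory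
  | .inl c, v => if h : (c : ℕ) < P.N then .inl ⟨c + 1, by omega⟩ else .inr (.inl (A.owner v))
  | .inr _, v => .inr (.inl (A.owner v))

noncomputable def up (s : P.Memory) (v : V) : P.Memory :=
  if P.OnTrack s v then P.advance s v else .inr (.inr (P.culprit s))

noncomputable def nxt (s : P.Memory) (v : V) : V :=
  if P.OnTrack s v then P.plan s v else A.punisher (P.culprit s) (T (P.culprit s)) v

lemma edge_nxt (s : P.Memory) (v : V) : A.E v (P.nxt s v) := by
  unfold nxt
  split_ifs with h
  · rcases s with c | _
    · exact (show v = P.ρ c from h) ▸ P.isPlay c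
    · exact P.edge_f v
  · exact A.edge_succWith _ v

noncomputable def mealy : Mealy A P.Memory := ⟨.inl 0, P.up, P.nxt, P.edge_nxt⟩

noncomputable def strategy : A.Strategy :=
  ⟨fun h v => P.nxt (h.foldl P.up (.inl 0)) v, fun _ v => P.edge_nxt _ v⟩

lemma inducedBy_mealy : InducedBy P.strategy P.mealy := fun _ _ => rfl

lemma card_memory : Nat.card P.Memory = P.N + 1 + 2 * n := by
  simp [Nat.card_eq_fintype_card]
  omega

lemma finiteMemory_strategy : FiniteMemory P.strategy :=
  ⟨_, P.mealy, inferInstance, P.inducedBy_mealy⟩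

lemma hasMemorySize_strategy [Finite V] : HasMemorySize P.strategy (Nat.card V + 2 * n) := by
  refine ⟨_, P.mealy, inferInstance, ?_, P.inducedBy_mealy⟩
  have hinj : Function.Injective fun k : Fin (P.N + 1) => P.ρ k := fun a b h =>
    Fin.ext (P.injOn (Set.mem_Iic.mpr (by omega)) (Set.mem_Iic.mpr (by omega)) h)
  have := Nat.card_le_card_of_injective _ hinj
  rw [Nat.card_eq_fintype_card, Fintype.card_fin] at this
  rw [card_memory]
  omega

noncomputable def memAt (ξ : ℕ → V) (m : ℕ) : P.Memory := (pref ξ m).foldl P.up (.inl 0)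

lemma memAt_succ (ξ : ℕ → V) (m : ℕ) : P.memAt ξ (m + 1) = P.up (P.memAt ξ m) (ξ m) := by
  simp [memAt, pref_succ]

lemma strategy_next (ξ : ℕ → V) (m : ℕ) :
    P.strategy.next (pref ξ m) (ξ m) = P.nxt (P.memAt ξ m) (ξ m) := rfl

lemma onTrack_up_plan {s : P.Memory} {v : V} (h : P.OnTrack s v) :
    P.OnTrack (P.up s v) (P.plan s v) ∧ P.culprit (P.up s v) = A.owner v := by
  rw [up, if_pos h]
  rcases s with c | j | j
  · have hv : v = P.ρ c := h
    by_cases hc : (c : ℕ) < P.N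
    · simp [advance, hc, OnTrack, plan, culprit, hv]
    · simp only [advance, hc, dif_neg, not_false_eq_true, OnTrack, plan, culprit, and_true]
      exact P.mem_O _ (by omega)
  · exact ⟨P.mapsTo_f h, rfl⟩
  · exact h.elim

lemma notMem_winRegion_of_onTrack {s : P.Memory} {v : V} (h : P.OnTrack s v) {i : Fin n}
    (hi : i ∉ satCoBuchi T P.ρ) : v ∉ A.winRegion i (CoBuchiObj (T i)) := by
  rcases s with c | j | j
  · exact (show v = P.ρ c from h) ▸ P.losersAvoid i hi c
  · exact P.losersAvoid_O i hi v h
  · exact h.elim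

lemma memAt_of_onTrack {ξ : ℕ → V} {m : ℕ} (h : ∀ k < m, P.OnTrack (P.memAt ξ k) (ξ k)) :
    (∃ hm : m ≤ P.N, P.memAt ξ m = .inl ⟨m, by omega⟩) ∨
      (P.N < m ∧ ∃ j, P.memAt ξ m = .inr (.inl j)) := by
  induction m with
  | zero => exact .inl ⟨Nat.zero_le _, rfl⟩
  | succ m ih =>
    rw [memAt_succ, up, if_pos (h m (by omega))]
    rcases ih fun k hk => h k (by omega) with ⟨hm, hs⟩ | ⟨hm, j, hs⟩
    · rw [hs]
      by_cases hmN : m < P.N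
      · exact .inl ⟨hmN, by simp [advance, hmN]⟩
      · exact .inr ⟨by omega, A.owner (ξ m), by simp [advance, hmN]⟩
    · exact .inr ⟨by omega, _, by rw [hs]; rfl⟩

lemma onTrack_memAt_ρ (m : ℕ) : P.OnTrack (P.memAt P.ρ m) (P.ρ m) := by
  induction m using Nat.strong_induction_on with
  | _ m ih =>
    rcases P.memAt_of_onTrack ih with ⟨_, hs⟩ | ⟨hm, j, hs⟩
    · rw [hs]
      rfl
    · rw [hs]
      exact P.mem_O m hm.le

lemma outcome_strategy : outcome A (fun _ => P.strategy) v0 = P.ρ := by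
  refine outcome_eq_of_succ P.ρ_zero fun m => ?_
  rw [strategy_next, nxt, if_pos (P.onTrack_memAt_ρ m)]
  rcases P.memAt_of_onTrack fun k _ => P.onTrack_memAt_ρ k with ⟨_, hs⟩ | ⟨hm, j, hs⟩
  · rw [hs]
    rfl
  · rw [hs]
    exact P.ρ_succ m hm.le

lemma memAt_of_not_onTrack {ξ : ℕ → V} {k : ℕ} (hk : ¬ P.OnTrack (P.memAt ξ k) (ξ k)) (t : ℕ) :
    ¬ P.OnTrack (P.memAt ξ (t + k)) (ξ (t + k)) ∧
      P.culprit (P.memAt ξ (t + k)) = P.culprit (P.memAt ξ k) := by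
  induction t with
  | zero => simpa using hk
  | succ t ih =>
    rw [Nat.add_right_comm, memAt_succ, up, if_neg ih.1]
    exact ⟨id, ih.2⟩

variable {P}

/-- When the history first leaves the track, the deviator is the owner of the previous
vertex; the strategy then punishes them from a vertex outside their winning region. -/
theorem notMem_coBuchiObj_of_not_onTrack {i : Fin n} (hi : i ∉ satCoBuchi T P.ρ) {ξ : ℕ → V}
    (hξ : A.IsPlay ξ) (h0 : ξ 0 = v0)
    (hfollow : ∀ m, A.owner (ξ m) ≠ i → ξ (m + 1) = P.nxt (P.memAt ξ m) (ξ m)) {k : ℕ}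
    (hk : ¬ P.OnTrack (P.memAt ξ k) (ξ k)) : ξ ∉ CoBuchiObj (T i) := by
  have hex : ∃ k, ¬ P.OnTrack (P.memAt ξ k) (ξ k) := ⟨k, hk⟩
  obtain ⟨m, hm⟩ : ∃ m, Nat.find hex = m + 1 := by
    refine Nat.exists_eq_add_one.mpr (Nat.pos_of_ne_zero fun h => ?_)
    have h' := h ▸ Nat.find_spec hex
    exact h' (h0.trans P.ρ_zero.symm)
  have hmon : P.OnTrack (P.memAt ξ m) (ξ m) := not_not.mp (Nat.find_min hex (by omega))
  have hoff := hm ▸ Nat.find_spec hex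
  have hown : A.owner (ξ m) = i := by
    by_contra ho
    rw [hfollow m ho, nxt, if_pos hmon, memAt_succ] at hoff
    exact hoff (P.onTrack_up_plan hmon).1
  have hculprit : P.culprit (P.memAt ξ (m + 1)) = i := by
    rw [memAt_succ, (P.onTrack_up_plan hmon).2, hown]
  have hsafe : ξ (m + 1) ∉ A.winRegion i (CoBuchiObj (T i)) := fun h =>
    P.notMem_winRegion_of_onTrack hmon hi
      (mem_winRegion_of_edge (coBuchiObj_prepend _) hown (hξ m) h)
  refine fun hco => notMem_coBuchiObj_of_punisher (i := i) (hξ.shift (m + 1))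
    (by simpa using hsafe) (fun t ht => ?_) (shift_mem_coBuchiObj_iff.mpr hco)
  have hpun := P.memAt_of_not_onTrack hoff t
  simp only [shift_apply, Nat.add_right_comm t 1] at ht ⊢
  rw [hfollow _ ht, nxt, if_neg hpun.1, hpun.2, hculprit]

theorem isNEObj_strategy :
    A.IsNEObj (fun i => CoBuchiObj (T i)) (fun _ => P.strategy) v0 := by
  intro i τ hξ
  rw [outcome_strategy]
  by_contra hi
  have hplay := outcome_isPlay (Function.update (fun _ => P.strategy) i τ) v0
  generalize hξdef : outcome A (Function.update (fun _ => P.strategy) i τ) v0 = ξ at hξ hplay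
  have hfollow : ∀ m, A.owner (ξ m) ≠ i → ξ (m + 1) = P.nxt (P.memAt ξ m) (ξ m) :=
    fun m hm => by subst hξdef; rw [outcome_succ, Function.update_of_ne hm]; rfl
  by_cases hoff : ∃ k, ¬ P.OnTrack (P.memAt ξ k) (ξ k)
  · obtain ⟨k, hk⟩ := hoff
    exact notMem_coBuchiObj_of_not_onTrack hi hplay (hξdef ▸ rfl) hfollow hk hξ
  · push Not at hoff
    have hO : ∀ m, ξ (m + P.N) ∈ P.O := fun m => by
      have hon := hoff (m + P.N)
      rcases P.memAt_of_onTrack (m := m + P.N) fun k _ => hoff k with ⟨hm, hs⟩ | ⟨_, j, hs⟩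
      · rw [hs] at hon
        exact (show ξ (m + P.N) = P.ρ (m + P.N) from hon) ▸ P.mem_O _ (by omega)
      · rw [hs] at hon
        exact hon
    exact hi (P.satCoBuchi_subset _ (hplay.shift P.N) hO
      (satCoBuchi_shift T ξ P.N ▸ hξ))

end NEPlan

end plan

end Arena

/-- From any NE in a co-Büchi game one can derive a finite-memory NE
whose outcome satisfies at least the same objectives; with memory size at most
`|V| + 2n` if the arena is finite. -/
theorem cobuchi_fm_ne
    (V : Type) (n : ℕ) (A : Arena V n) (T : Fin n → Set V) (v0 : V)
    (σ' : Fin n → A.Strategy)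
    (hNE : A.IsNEObj (fun i => CoBuchiObj (T i)) σ' v0) :
    (∃ σ : Fin n → A.Strategy,
      A.IsNEObj (fun i => CoBuchiObj (T i)) σ v0 ∧
      satCoBuchi T (outcome A σ' v0) ⊆ satCoBuchi T (outcome A σ v0) ∧
      ∀ i, FiniteMemory (σ i)) ∧
    (Finite V →
      ∃ σ : Fin n → A.Strategy,
        A.IsNEObj (fun i => CoBuchiObj (T i)) σ v0 ∧
        satCoBuchi T (outcome A σ' v0) ⊆ satCoBuchi T (outcome A σ v0) ∧
        ∀ i, HasMemorySize (σ i) (Nat.card V + 2 * n)) := by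
  obtain ⟨P, hsat⟩ := hNE.exists_nePlan
  rw [← P.outcome_strategy] at hsat
  exact ⟨⟨fun _ => P.strategy, P.isNEObj_strategy, hsat, fun _ => P.finiteMemory_strategy⟩,
    fun _ => ⟨fun _ => P.strategy, P.isNEObj_strategy, hsat, fun _ => P.hasMemorySize_strategy⟩⟩
end
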